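/- arXiv:2204.11417 — 5 statements merged into one kernel-verified Lean document; each statement's English description precedes it below -/
import Mathlib

section
/- Let A be a finite set and, for each a ∈ A, let x_a^(1),…,x_a^(T) ∈ Δ(A) be arbitrary strategies. For each t ∈ [T] let Q^(t) ∈ ℝ^{A×A} be the row-stochastic matrix whose row a equals x_a^(t), and let x^(t) ∈ Δ(A) satisfy (Q^(t))^⊤ x^(t) = x^(t). Given any utility vectors u^(1),…,u^(T) ∈ ℝ^A, define for each a ∈ A the external regret Reg_a^T = max_{x*∈Δ(A)} ∑_{t=1}^T ⟨x* − x_a^(t), x^(t)[a]·u^(t)⟩, and let SwapReg^T be the swap regret of the played sequence (x^(t)) against (u^(t)). Then SwapReg^T = ∑_{a∈A} Reg_a^T. -/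
open Finset Matrix

/-- The swap regret of the sequence of strategies `x` against the sequence of
utility vectors `u` up to time `T`: the maximum, over all row-stochastic
matrices `M`, of `∑_{t=1}^T ⟨Mᵀ x^(t) − x^(t), u^(t)⟩`. -/
noncomputable def swapRegret {A : Type*} [Fintype A] (T : ℕ)
    (x u : ℕ → A → ℝ) : ℝ :=
  ⨆ M : {M : Matrix A A ℝ // ∀ a, M a ∈ stdSimplex ℝ A},
    ∑ t ∈ Finset.Icc 1 T, ∑ a, ((M.1)ᵀ.mulVec (x t) a - x t a) * u t a

/-- The external regret of the regret minimizer `𝔑_a`, which plays `xa a` and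
observes the utilities `x^(t)[a] · u^(t)`:
`max_{x* ∈ Δ(A)} ∑_{t=1}^T ⟨x* − x_a^(t), x^(t)[a]·u^(t)⟩`. -/
noncomputable def extRegretBM {A : Type*} [Fintype A] (T : ℕ)
    (xa : ℕ → A → ℝ) (x : ℕ → A → ℝ) (u : ℕ → A → ℝ) (a : A) : ℝ :=
  ⨆ p : stdSimplex ℝ A,
    ∑ t ∈ Finset.Icc 1 T, ∑ a', (p.1 a' - xa t a') * (x t a * u t a')

/-- the Blum–Mansour reduction: if for each `a ∈ A` the strategies
`x_a^(t) ∈ Δ(A)` are arbitrary, `Q^(t)` is the row-stochastic matrix whose row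
`a` is `x_a^(t)`, and `x^(t) ∈ Δ(A)` is a stationary distribution of `Q^(t)`
(i.e. `(Q^(t))ᵀ x^(t) = x^(t)`), then for any utility vectors `u^(t)` the swap
regret of `(x^(t))_t` equals the sum over `a` of the external regrets of the
regret minimizers fed with utilities `x^(t)[a]·u^(t)`. -/
theorem swapRegret_eq_sum_extRegret (A : Type*) [Fintype A] (T : ℕ)
    (xa : A → ℕ → A → ℝ)
    (hxa : ∀ a, ∀ t ∈ Finset.Icc 1 T, xa a t ∈ stdSimplex ℝ A)
    (x : ℕ → A → ℝ)
    (hx : ∀ t ∈ Finset.Icc 1 T, x t ∈ stdSimplex ℝ A)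
    (hstat : ∀ t ∈ Finset.Icc 1 T, ∀ a', ∑ a, xa a t a' * x t a = x t a')
    (u : ℕ → A → ℝ) :
    swapRegret T x u = ∑ a, extRegretBM T (xa a) x u a := by
  classical
  rcases isEmpty_or_nonempty A with hA | hA
  · have : Nonempty {M : Matrix A A ℝ // ∀ a, M a ∈ stdSimplex ℝ A} :=
      ⟨⟨fun a _ => 0, fun a => (IsEmpty.false a).elim⟩⟩
    simp [swapRegret, Finset.univ_eq_empty, ciSup_const]
  -- the per-minimizer payoff function
  set f : A → (A → ℝ) → ℝ := fun a p =>
    ∑ t ∈ Finset.Icc 1 T, ∑ a', (p a' - xa a t a') * (x t a * u t a') with hf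
  -- linear form of f
  set C : A → A → ℝ := fun a a' => ∑ t ∈ Finset.Icc 1 T, x t a * u t a' with hC
  have flin : ∀ a (p : A → ℝ), f a p
      = (∑ a', p a' * C a a')
        - ∑ t ∈ Finset.Icc 1 T, ∑ a', xa a t a' * (x t a * u t a') := by
    intro a p
    simp only [hf, hC, sub_mul, Finset.sum_sub_distrib, Finset.mul_sum]
    rw [Finset.sum_comm]
  -- choose a maximizing vertex for each a
  have hmax : ∀ a : A, ∃ b : A, ∀ b' : A, C a b' ≤ C a b := by
    intro a
    obtain ⟨b, -, hb⟩ := Finset.exists_max_image Finset.univ (C a) univ_nonempty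
    exact ⟨b, fun b' => hb b' (mem_univ b')⟩
  choose astar hastar using hmax
  set pstar : A → A → ℝ := fun a a' => if a' = astar a then 1 else 0 with hps
  have hpstar_mem : ∀ a, pstar a ∈ stdSimplex ℝ A := by
    intro a
    constructor
    · intro a'; by_cases h : a' = astar a <;> simp [hps, h]
    · simp [hps]
  -- pstar a maximizes f a over the simplex
  have hopt : ∀ a, ∀ p ∈ stdSimplex ℝ A, f a p ≤ f a (pstar a) := by
    intro a p hp
    rw [flin, flin]
    apply sub_le_sub_right
    have h1 : ∑ a', pstar a a' * C a a' = C a (astar a) := by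
      simp [hps]
    rw [h1]
    calc ∑ a', p a' * C a a' ≤ ∑ a', p a' * C a (astar a) := by
          apply Finset.sum_le_sum
          intro a' _
          exact mul_le_mul_of_nonneg_left (hastar a a') (hp.1 a')
      _ = C a (astar a) := by rw [← Finset.sum_mul, hp.2, one_mul]
  -- key identity: the swap objective decomposes
  have key : ∀ M : Matrix A A ℝ,
      ∑ t ∈ Finset.Icc 1 T, ∑ a, ((M)ᵀ.mulVec (x t) a - x t a) * u t a
        = ∑ a, f a (M a) := by
    intro M
    have : ∀ t ∈ Finset.Icc 1 T,
        ∑ a', ((M)ᵀ.mulVec (x t) a' - x t a') * u t a'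
          = ∑ a, ∑ a', (M a a' - xa a t a') * (x t a * u t a') := by
      intro t ht
      rw [Finset.sum_comm]
      apply Finset.sum_congr rfl
      intro a' _
      have hmv : (M)ᵀ.mulVec (x t) a' = ∑ a, M a a' * x t a := by
        simp [Matrix.mulVec, dotProduct, Matrix.transpose_apply]
      rw [hmv, ← hstat t ht a', ← Finset.sum_sub_distrib, Finset.sum_mul]
      apply Finset.sum_congr rfl
      intro a _
      ring
    rw [Finset.sum_congr rfl this, Finset.sum_comm]
  -- extRegretBM equals f a (pstar a)
  have hext : ∀ a, extRegretBM T (xa a) x u a = f a (pstar a) := by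
    intro a
    have hne : Nonempty (stdSimplex ℝ A) := ⟨⟨pstar a, hpstar_mem a⟩⟩
    apply le_antisymm
    · exact ciSup_le fun p => hopt a p.1 p.2
    · refine le_ciSup (f := fun p : stdSimplex ℝ A => f a p.1) ?_ ⟨pstar a, hpstar_mem a⟩
      exact ⟨f a (pstar a), by rintro y ⟨p, rfl⟩; exact hopt a p.1 p.2⟩
  rw [Finset.sum_congr rfl (fun a _ => hext a)]
  -- swapRegret equals the sum
  have hMne : Nonempty {M : Matrix A A ℝ // ∀ a, M a ∈ stdSimplex ℝ A} :=
    ⟨⟨pstar, hpstar_mem⟩⟩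
  apply le_antisymm
  · apply ciSup_le
    intro M
    rw [key M.1]
    exact Finset.sum_le_sum fun a _ => hopt a (M.1 a) (M.2 a)
  · have := le_ciSup (f := fun M : {M : Matrix A A ℝ // ∀ a, M a ∈ stdSimplex ℝ A} =>
        ∑ t ∈ Finset.Icc 1 T, ∑ a, ((M.1)ᵀ.mulVec (x t) a - x t a) * u t a)
      (c := ⟨pstar, hpstar_mem⟩) ?_
    · calc ∑ a, f a (pstar a)
          = ∑ t ∈ Finset.Icc 1 T, ∑ a, ((pstar : Matrix A A ℝ)ᵀ.mulVec (x t) a - x t a) * u t a :=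
            (key pstar).symm
        _ ≤ swapRegret T x u := this
    · refine ⟨∑ a, f a (pstar a), ?_⟩
      rintro y ⟨M, rfl⟩
      dsimp only
      rw [key M.1]
      exact Finset.sum_le_sum fun a _ => hopt a (M.1 a) (M.2 a)
end

section
/- Suppose η > 0 satisfies η‖u^(t) − m^(t)‖_{*,x^(t)} ≤ 1/2 and η‖m^(t)‖_{*,g^(t−1)} ≤ 1/2 for all t ∈ [T]. Then for every x* ∈ int(X), Reg^T(x*) ≤ ℛ(x*)/η + 2η ∑_{t=1}^T ‖u^(t) − m^(t)‖²_{*,x^(t)} − (1/(4η)) ∑_{t=1}^T ( ‖x^(t) − g^(t)‖²_{x^(t)} + ‖x^(t) − g^(t−1)‖²_{g^(t−1)} ). -/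
open Finset Matrix

/-- The quadratic form `v ⬝ M v` associated to a matrix `M`. -/
noncomputable def quadForm {d : ℕ} (M : Matrix (Fin d) (Fin d) ℝ) (v : Fin d → ℝ) : ℝ :=
  v ⬝ᵥ M.mulVec v

/-- The primal local norm `‖v‖_x = √(vᵀ ∇²ℛ(x) v)` (here `M = ∇²ℛ(x)`). -/
noncomputable def locNorm {d : ℕ} (M : Matrix (Fin d) (Fin d) ℝ) (v : Fin d → ℝ) : ℝ :=
  Real.sqrt (quadForm M v)

/-- The dual local norm `‖v‖_{*,x} = √(vᵀ (∇²ℛ(x))⁻¹ v)` (here `M = ∇²ℛ(x)`). -/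
noncomputable def dualNorm {d : ℕ} (M : Matrix (Fin d) (Fin d) ℝ) (v : Fin d → ℝ) : ℝ :=
  Real.sqrt (quadForm M⁻¹ v)

/-- `ω(s) = s − log(1+s)`. -/
noncomputable def omegaFn (s : ℝ) : ℝ := s - Real.log (1 + s)


section OftrlAux

open Set Matrix

variable {d : ℕ}

lemma quadForm_pos {M : Matrix (Fin d) (Fin d) ℝ} (hM : M.PosDef) {v : Fin d → ℝ} (hv : v ≠ 0) :
    0 < quadForm M v := by
  have := hM.dotProduct_mulVec_pos hv
  simpa [quadForm] using this

lemma quadForm_nonneg {M : Matrix (Fin d) (Fin d) ℝ} (hM : M.PosDef) (v : Fin d → ℝ) :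
    0 ≤ quadForm M v := by
  rcases eq_or_ne v 0 with rfl | hv
  · simp [quadForm]
  · exact (quadForm_pos hM hv).le

lemma locNorm_nonneg (M : Matrix (Fin d) (Fin d) ℝ) (v : Fin d → ℝ) : 0 ≤ locNorm M v :=
  Real.sqrt_nonneg _

lemma dualNorm_nonneg (M : Matrix (Fin d) (Fin d) ℝ) (v : Fin d → ℝ) : 0 ≤ dualNorm M v :=
  Real.sqrt_nonneg _

lemma locNorm_sub_comm (M : Matrix (Fin d) (Fin d) ℝ) (a b : Fin d → ℝ) :
    locNorm M (a - b) = locNorm M (b - a) := by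
  have : a - b = -(b - a) := by abel
  rw [this]
  unfold locNorm quadForm
  rw [Matrix.mulVec_neg, dotProduct_neg, neg_dotProduct, neg_neg]

lemma symm_dot {M : Matrix (Fin d) (Fin d) ℝ} (hsym : ∀ i j, M j i = M i j)
    (a b : Fin d → ℝ) : a ⬝ᵥ M.mulVec b = b ⬝ᵥ M.mulVec a := by
  simp only [dotProduct, mulVec, Finset.mul_sum]
  rw [Finset.sum_comm]
  refine Finset.sum_congr rfl fun i _ => Finset.sum_congr rfl fun j _ => ?_
  rw [hsym i j]; ring

lemma posdef_symm_entries {M : Matrix (Fin d) (Fin d) ℝ} (hM : M.PosDef) (i j : Fin d) :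
    M j i = M i j := by
  have := hM.1.apply i j
  simpa using this

lemma cauchy_schwarz_quad {M : Matrix (Fin d) (Fin d) ℝ} (hM : M.PosDef) (δ w : Fin d → ℝ) :
    δ ⬝ᵥ w ≤ dualNorm M δ * locNorm M w := by
  have hMinv : (M⁻¹).PosDef := hM.inv
  have hdet : IsUnit M.det := (hM.det_pos.ne').isUnit
  have hMM : M * M⁻¹ = 1 := Matrix.mul_nonsing_inv _ hdet
  set v0 : Fin d → ℝ := M⁻¹.mulVec δ with hv0
  set p := quadForm M⁻¹ δ with hp
  set q := quadForm M w with hq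
  set r := δ ⬝ᵥ w with hr
  have hMv0 : M.mulVec v0 = δ := by
    rw [hv0, Matrix.mulVec_mulVec, hMM, Matrix.one_mulVec]
  have hv0Mv0 : v0 ⬝ᵥ M.mulVec v0 = p := by
    rw [hMv0, dotProduct_comm, hp, quadForm]
  have hwMv0 : w ⬝ᵥ M.mulVec v0 = r := by
    rw [hMv0, dotProduct_comm, hr]
  have hv0Mw : v0 ⬝ᵥ M.mulVec w = r := by
    rw [symm_dot (posdef_symm_entries hM) v0 w, hwMv0]
  have key : ∀ c : ℝ, 0 ≤ c ^ 2 * p - 2 * c * r + q := by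
    intro c
    have h0 : 0 ≤ quadForm M (c • v0 - w) := quadForm_nonneg hM _
    have hexp : quadForm M (c • v0 - w) = c ^ 2 * p - 2 * c * r + q := by
      unfold quadForm
      rw [Matrix.mulVec_sub, Matrix.mulVec_smul, sub_dotProduct, smul_dotProduct,
        dotProduct_sub, dotProduct_smul, dotProduct_sub, dotProduct_smul]
      simp only [smul_eq_mul]
      rw [hv0Mv0, hv0Mw, hwMv0]
      show c * (c * p - r) - (c * r - q) = _
      ring
    linarith [hexp ▸ h0]
  have hq0 : 0 ≤ q := quadForm_nonneg hM w
  have hpq : r ^ 2 ≤ p * q := by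
    rcases eq_or_lt_of_le (quadForm_nonneg hMinv δ) with hp0 | hppos
    · have hδ : δ = 0 := by
        by_contra hδ
        exact absurd (quadForm_pos hMinv hδ) (by rw [← hp0]; simp)
      have hr0 : r = 0 := by simp [hr, hδ]
      rw [hr0]
      simpa using mul_nonneg (quadForm_nonneg hMinv δ) (quadForm_nonneg hM w)
    · have hppos' : 0 < p := hppos
      have hkey := key (r / p)
      have hp' : p ≠ 0 := hppos'.ne'
      have h3 : (r/p) ^ 2 * p - 2 * (r/p) * r + q = q - r^2/p := by
        field_simp; ring
      rw [h3] at hkey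
      have h4 : r^2/p ≤ q := by linarith
      have h5 := (div_le_iff₀ hppos').1 h4
      linarith [h5]
  have hp0 : 0 ≤ p := quadForm_nonneg hMinv δ
  calc r ≤ |r| := le_abs_self r
    _ = Real.sqrt (r ^ 2) := (Real.sqrt_sq_eq_abs r).symm
    _ ≤ Real.sqrt (p * q) := Real.sqrt_le_sqrt hpq
    _ = Real.sqrt p * Real.sqrt q := Real.sqrt_mul hp0 q
    _ = dualNorm M δ * locNorm M w := rfl

lemma le_of_deriv_nonneg_Icc {f f' : ℝ → ℝ} {a b : ℝ} (hab : a ≤ b)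
    (hder : ∀ t ∈ Icc a b, HasDerivAt f (f' t) t)
    (h0 : ∀ t ∈ Icc a b, 0 ≤ f' t) : f a ≤ f b := by
  have hmono : MonotoneOn f (Icc a b) := by
    apply monotoneOn_of_deriv_nonneg (convex_Icc a b)
    · exact fun t ht => (hder t ht).continuousAt.continuousWithinAt
    · intro t ht
      exact ((hder t (interior_subset ht)).differentiableAt).differentiableWithinAt
    · intro t ht
      rw [(hder t (interior_subset ht)).deriv]
      exact h0 t (interior_subset ht)
  exact hmono (left_mem_Icc.2 hab) (right_mem_Icc.2 hab) hab

lemma abs_sub_le_of_deriv_bound {f f' : ℝ → ℝ} {C : ℝ} {t : ℝ} (ht : t ∈ Icc (0:ℝ) 1)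
    (hder : ∀ s ∈ Icc (0:ℝ) 1, HasDerivAt f (f' s) s)
    (hbd : ∀ s ∈ Icc (0:ℝ) 1, |f' s| ≤ C) : f t - f 0 ≤ C * t := by
  have := Convex.norm_image_sub_le_of_norm_hasDerivWithin_le
    (f := f) (f' := f') (s := Icc (0:ℝ) 1) (C := C)
    (fun s hs => (hder s hs).hasDerivWithinAt) (fun s hs => hbd s hs)
    (convex_Icc 0 1) (left_mem_Icc.2 zero_le_one) ht
  have h2 : |f t - f 0| ≤ C * |t| := by simpa [Real.norm_eq_abs] using this
  have h3 : |t| = t := abs_of_nonneg ht.1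
  rw [h3] at h2
  exact le_trans (le_abs_self _) h2

lemma omega_quarter {s : ℝ} (h0 : 0 ≤ s) (h1 : s ≤ 1) : s^2/4 ≤ omegaFn s := by
  have key : (fun r => omegaFn r - r^2/4) 0 ≤ (fun r => omegaFn r - r^2/4) s := by
    apply le_of_deriv_nonneg_Icc (f := fun r => omegaFn r - r^2/4)
      (f' := fun r => 1 - 1/(1+r) - r/2) h0
    · intro r hr
      have hr1 : 0 < 1 + r := by linarith [hr.1]
      have hlog : HasDerivAt (fun r : ℝ => Real.log (1+r)) (1/(1+r)) r := by
        simpa using ((hasDerivAt_id r).const_add 1).log hr1.ne'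
      have hsq : HasDerivAt (fun r : ℝ => r^2/4) (r/2) r := by
        have h := (hasDerivAt_pow 2 r).div_const 4
        refine h.congr_deriv ?_
        norm_num
        ring
      have : HasDerivAt (fun r : ℝ => r - Real.log (1+r) - r^2/4)
          (1 - 1/(1+r) - r/2) r := ((hasDerivAt_id r).sub hlog).sub hsq
      exact this
    · intro r hr
      have hr1 : 0 < 1 + r := by linarith [hr.1]
      have heq : 1 - 1/(1+r) - r/2 = r*(1-r)/(2*(1+r)) := by field_simp; ring
      rw [heq]
      have : 0 ≤ r*(1-r) := mul_nonneg hr.1 (by linarith [hr.2, h1])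
      positivity
  simp only at key
  have h2 : omegaFn 0 = 0 := by simp [omegaFn]
  rw [h2] at key
  norm_num at key
  linarith

lemma newton_bound {s lam : ℝ} (hs : 0 ≤ s) (hlam : 0 ≤ lam) (hl2 : lam ≤ 1/2)
    (hkey : s^2/(1+s) ≤ lam * s) : s ≤ 2 * lam := by
  rcases eq_or_lt_of_le hs with h0 | hpos
  · linarith [h0.le, hlam]
  · have h1s : 0 < 1 + s := by linarith
    have h2 : s^2 ≤ lam * s * (1+s) := (div_le_iff₀ h1s).1 hkey
    nlinarith [hpos]

noncomputable def dotCLM (v : Fin d → ℝ) : (Fin d → ℝ) →L[ℝ] ℝ :=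
  LinearMap.toContinuousLinearMap
    { toFun := fun w => w ⬝ᵥ v
      map_add' := by intros; simp [add_dotProduct]
      map_smul' := by intros; simp [smul_dotProduct] }

@[simp] lemma dotCLM_apply (v w : Fin d → ℝ) : dotCLM v w = w ⬝ᵥ v := rfl

lemma grad_eq {S : Set (Fin d → ℝ)} (hSo : IsOpen S)
    {R : (Fin d → ℝ) → ℝ} (hR : ContDiffOn ℝ 3 R S)
    {η : ℝ} {v : Fin d → ℝ} {a : Fin d → ℝ} (ha : a ∈ S)
    (hmax : IsMaxOn (fun y => η * (y ⬝ᵥ v) - R y) S a) :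
    ∀ w, fderiv ℝ R a w = η * (w ⬝ᵥ v) := by
  have hloc : IsLocalMax (fun y => η * (y ⬝ᵥ v) - R y) a :=
    hmax.isLocalMax (hSo.mem_nhds ha)
  have hRd : HasFDerivAt R (fderiv ℝ R a) a :=
    ((hR.contDiffAt (hSo.mem_nhds ha)).differentiableAt (by norm_num)).hasFDerivAt
  have hlin : HasFDerivAt (fun y : Fin d → ℝ => η * (y ⬝ᵥ v)) (η • dotCLM v) a := by
    have h1 : HasFDerivAt (fun y : Fin d → ℝ => y ⬝ᵥ v) (dotCLM v) a :=
      (dotCLM v).hasFDerivAt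
    exact h1.const_mul η
  have hF : HasFDerivAt (fun y : Fin d → ℝ => η * (y ⬝ᵥ v) - R y)
      (η • dotCLM v - fderiv ℝ R a) a := hlin.sub hRd
  have hzero := hloc.hasFDerivAt_eq_zero hF
  intro w
  have := congrArg (fun L : (Fin d → ℝ) →L[ℝ] ℝ => L w) hzero
  simp at this
  linarith [this]

lemma dot_sum (v : Fin d → ℝ) (s : Finset ℕ) (w : ℕ → Fin d → ℝ) :
    v ⬝ᵥ (∑ t ∈ s, w t) = ∑ t ∈ s, v ⬝ᵥ w t := by
  classical
  induction s using Finset.induction_on with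
  | empty => simp [dotProduct]
  | insert _ _ hns ih =>
    rw [Finset.sum_insert hns, Finset.sum_insert hns, dotProduct_add, ih]

lemma sc_key
    {S : Set (Fin d → ℝ)} (hSo : IsOpen S) (hSc : Convex ℝ S)
    {R : (Fin d → ℝ) → ℝ} (hR : ContDiffOn ℝ 3 R S)
    {H : (Fin d → ℝ) → Matrix (Fin d) (Fin d) ℝ}
    (hH : ∀ z ∈ S, ∀ v w : Fin d → ℝ, iteratedFDeriv ℝ 2 R z ![v, w] = v ⬝ᵥ (H z).mulVec w)
    (hSC : ∀ z ∈ S, ∀ v : Fin d → ℝ, |iteratedFDeriv ℝ 3 R z ![v,v,v]| ≤ 2 * (locNorm (H z) v) ^ 3)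
    (hPD : ∀ z ∈ S, (H z).PosDef)
    {x y : Fin d → ℝ} (hx : x ∈ S) (hy : y ∈ S) :
    omegaFn (locNorm (H x) (y - x)) ≤ R y - R x - fderiv ℝ R x (y - x) ∧
    (locNorm (H x) (y-x))^2 / (1 + locNorm (H x) (y-x))
      ≤ fderiv ℝ R y (y - x) - fderiv ℝ R x (y - x) := by
  rcases eq_or_ne (y - x) 0 with h0 | hne
  · have hyx : y = x := by
      have := sub_eq_zero.1 h0; exact this
    subst hyx
    simp [omegaFn, locNorm, quadForm]
  set h : Fin d → ℝ := y - x with hh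
  set s : ℝ := locNorm (H x) h with hsdef
  have hs : 0 < s := Real.sqrt_pos.2 (quadForm_pos (hPD x hx) hne)
  set z : ℝ → (Fin d → ℝ) := fun t => x + t • h with hz
  have hz0 : z 0 = x := by simp [hz]
  have hz1 : z 1 = y := by simp [hz, hh]
  have hzS : ∀ t ∈ Icc (0:ℝ) 1, z t ∈ S := by
    intro t ht
    have hcomb : z t = (1 - t) • x + t • y := by
      simp only [hz, hh, smul_sub, sub_smul, one_smul]
      abel
    rw [hcomb]
    exact hSc hx hy (by linarith [ht.2]) ht.1 (by ring)
  have cdAt : ∀ t ∈ Icc (0:ℝ) 1, ContDiffAt ℝ 3 R (z t) :=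
    fun t ht => hR.contDiffAt (hSo.mem_nhds (hzS t ht))
  have hzder : ∀ t : ℝ, HasDerivAt z h t := by
    intro t
    have : HasDerivAt (fun t : ℝ => t • h) ((1:ℝ) • h) t := (hasDerivAt_id t).smul_const h
    exact (by simpa using this.const_add x : HasDerivAt (fun t : ℝ => x + t • h) h t)
  set p1 : ℝ → ℝ := fun t => fderiv ℝ R (z t) h with hp1def
  set p2 : ℝ → ℝ := fun t => fderiv ℝ (fderiv ℝ R) (z t) h h with hp2def
  set p3 : ℝ → ℝ := fun t => fderiv ℝ (fderiv ℝ (fderiv ℝ R)) (z t) h h h with hp3def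
  have hφ : ∀ t ∈ Icc (0:ℝ) 1, HasDerivAt (fun t => R (z t)) (p1 t) t := by
    intro t ht
    exact (((cdAt t ht).differentiableAt (by norm_num)).hasFDerivAt).comp_hasDerivAt t (hzder t)
  have hdR : ∀ t ∈ Icc (0:ℝ) 1, ContDiffAt ℝ 2 (fderiv ℝ R) (z t) := by
    intro t ht
    exact (cdAt t ht).fderiv_right (by norm_num)
  have hddR : ∀ t ∈ Icc (0:ℝ) 1, ContDiffAt ℝ 1 (fderiv ℝ (fderiv ℝ R)) (z t) := by
    intro t ht
    exact (hdR t ht).fderiv_right (by norm_num)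
  have hp1 : ∀ t ∈ Icc (0:ℝ) 1, HasDerivAt p1 (p2 t) t := by
    intro t ht
    have h1 : HasDerivAt (fun t => fderiv ℝ R (z t)) (fderiv ℝ (fderiv ℝ R) (z t) h) t :=
      (((hdR t ht).differentiableAt (by norm_num)).hasFDerivAt).comp_hasDerivAt t (hzder t)
    have := h1.clm_apply (hasDerivAt_const t h)
    simpa using this
  have hp2 : ∀ t ∈ Icc (0:ℝ) 1, HasDerivAt p2 (p3 t) t := by
    intro t ht
    have h1 : HasDerivAt (fun t => fderiv ℝ (fderiv ℝ R) (z t))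
        (fderiv ℝ (fderiv ℝ (fderiv ℝ R)) (z t) h) t := by
      exact (((hddR t ht).differentiableAt (by norm_num)).hasFDerivAt).comp_hasDerivAt t (hzder t)
    have h2 := h1.clm_apply (hasDerivAt_const t h)
    have h3 := h2.clm_apply (hasDerivAt_const t h)
    simpa using h3
  have hp2eq : ∀ t ∈ Icc (0:ℝ) 1, p2 t = quadForm (H (z t)) h := by
    intro t ht
    have := hH (z t) (hzS t ht) h h
    rw [iteratedFDeriv_two_apply] at this
    simpa [quadForm] using this
  have hp2pos : ∀ t ∈ Icc (0:ℝ) 1, 0 < p2 t := by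
    intro t ht
    rw [hp2eq t ht]
    exact quadForm_pos (hPD _ (hzS t ht)) hne
  have hp3bd : ∀ t ∈ Icc (0:ℝ) 1, |p3 t| ≤ 2 * (Real.sqrt (p2 t)) ^ 3 := by
    intro t ht
    have e3 : iteratedFDeriv ℝ 3 R (z t) ![h,h,h] = p3 t := by
      have h1 := iteratedFDeriv_succ_apply_right (𝕜 := ℝ) (n := 2) (f := R) (x := z t)
        (m := ![h,h,h])
      rw [iteratedFDeriv_two_apply] at h1
      have h2 : iteratedFDeriv ℝ 3 R (z t) ![h,h,h]
          = iteratedFDeriv ℝ (2+1) R (z t) ![h,h,h] := rfl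
      rw [h2, h1]
      congr 1
    have := hSC (z t) (hzS t ht) h
    rw [e3] at this
    have hloc : locNorm (H (z t)) h = Real.sqrt (p2 t) := by
      rw [hp2eq t ht]; rfl
    rwa [hloc] at this
  -- ψ bound
  set ψ : ℝ → ℝ := fun t => (Real.sqrt (p2 t))⁻¹ with hψdef
  set ψ' : ℝ → ℝ := fun t => -(1 / (2 * Real.sqrt (p2 t)) * p3 t) / (Real.sqrt (p2 t)) ^ 2
    with hψ'def
  have hψder : ∀ t ∈ Icc (0:ℝ) 1, HasDerivAt ψ (ψ' t) t := by
    intro t ht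
    have hpt := hp2pos t ht
    have hsqrt : HasDerivAt (fun t => Real.sqrt (p2 t))
        (1 / (2 * Real.sqrt (p2 t)) * p3 t) t :=
      (Real.hasDerivAt_sqrt hpt.ne').comp t (hp2 t ht)
    have hsqpos : 0 < Real.sqrt (p2 t) := Real.sqrt_pos.2 hpt
    exact hsqrt.inv hsqpos.ne'
  have hψbd : ∀ t ∈ Icc (0:ℝ) 1, |ψ' t| ≤ 1 := by
    intro t ht
    have hpt := hp2pos t ht
    have hsqpos : 0 < Real.sqrt (p2 t) := Real.sqrt_pos.2 hpt
    have hb := hp3bd t ht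
    have habs : |ψ' t| = |p3 t| / (2 * Real.sqrt (p2 t) ^ 3) := by
      rw [hψ'def]
      rw [abs_div, abs_neg, abs_mul,
        abs_of_pos (by positivity : (0:ℝ) < 1 / (2 * Real.sqrt (p2 t))),
        abs_of_pos (by positivity : (0:ℝ) < Real.sqrt (p2 t) ^ 2)]
      field_simp
    rw [habs, div_le_one (by positivity)]
    linarith
  have hψle : ∀ t ∈ Icc (0:ℝ) 1, ψ t ≤ ψ 0 + t := by
    intro t ht
    have := abs_sub_le_of_deriv_bound ht hψder hψbd
    linarith
  have hsq0 : Real.sqrt (p2 0) = s := by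
    rw [hp2eq 0 (by constructor <;> norm_num), hz0]
    rfl
  have p2lower : ∀ t ∈ Icc (0:ℝ) 1, s^2/(1+t*s)^2 ≤ p2 t := by
    intro t ht
    have hpt := hp2pos t ht
    have hsqpos : 0 < Real.sqrt (p2 t) := Real.sqrt_pos.2 hpt
    have h1ts : 0 < 1 + t * s := by nlinarith [ht.1, hs]
    have hψt : (Real.sqrt (p2 t))⁻¹ ≤ (1 + t*s)/s := by
      have h0 : ψ 0 = s⁻¹ := by rw [hψdef]; simp [hsq0]
      have := hψle t ht
      rw [h0] at this
      calc (Real.sqrt (p2 t))⁻¹ = ψ t := rfl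
        _ ≤ s⁻¹ + t := this
        _ = (1 + t*s)/s := by field_simp
    have hlow : s/(1+t*s) ≤ Real.sqrt (p2 t) := by
      have h2 := inv_anti₀ (by positivity) hψt
      rwa [inv_inv, inv_div] at h2
    have := pow_le_pow_left₀ (by positivity : (0:ℝ) ≤ s/(1+t*s)) hlow 2
    rwa [div_pow, Real.sq_sqrt hpt.le] at this
  -- derivative of the comparison function A t = s^2 t/(1+ts)
  have hAder : ∀ t : ℝ, 0 ≤ t → HasDerivAt (fun t => s^2 * t/(1+t*s)) (s^2/(1+t*s)^2) t := by
    intro t ht0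
    have h1ts : 0 < 1 + t * s := by nlinarith [hs]
    have hnum : HasDerivAt (fun t : ℝ => s^2 * t) (s^2) t := by
      simpa using (hasDerivAt_id t).const_mul (s^2)
    have hden : HasDerivAt (fun t : ℝ => 1 + t * s) s t := by
      simpa using ((hasDerivAt_id t).mul_const s).const_add 1
    have := hnum.div hden h1ts.ne'
    refine this.congr_deriv ?_
    congr 1
    ring
  have mono1 : ∀ t ∈ Icc (0:ℝ) 1, s^2 * t/(1+t*s) ≤ p1 t - p1 0 := by
    intro t ht
    have key : (fun t => p1 t - s^2 * t/(1+t*s)) 0 ≤ (fun t => p1 t - s^2 * t/(1+t*s)) t := by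
      apply le_of_deriv_nonneg_Icc (f := fun t => p1 t - s^2 * t/(1+t*s))
        (f' := fun t => p2 t - s^2/(1+t*s)^2) ht.1
      · intro r hr
        have hr1 : r ∈ Icc (0:ℝ) 1 := ⟨hr.1, le_trans hr.2 ht.2⟩
        exact (hp1 r hr1).sub (hAder r hr.1)
      · intro r hr
        have hr1 : r ∈ Icc (0:ℝ) 1 := ⟨hr.1, le_trans hr.2 ht.2⟩
        have := p2lower r hr1
        linarith
    simp only at key
    have hA0 : s^2 * 0/(1+0*s) = 0 := by norm_num
    rw [hA0] at key
    linarith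
  constructor
  · -- part (a)
    have hlogder : ∀ t ∈ Icc (0:ℝ) 1, HasDerivAt (fun t => Real.log (1+t*s)) (s/(1+t*s)) t := by
      intro t ht
      have h1ts : 0 < 1 + t * s := by nlinarith [ht.1, hs]
      have hden : HasDerivAt (fun t : ℝ => 1 + t * s) s t := by
        simpa using ((hasDerivAt_id t).mul_const s).const_add 1
      simpa using hden.log h1ts.ne'
    have key : (fun t => R (z t) - t * p1 0 - (t*s - Real.log (1+t*s))) 0
        ≤ (fun t => R (z t) - t * p1 0 - (t*s - Real.log (1+t*s))) 1 := by
      apply le_of_deriv_nonneg_Icc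
        (f := fun t => R (z t) - t * p1 0 - (t*s - Real.log (1+t*s)))
        (f' := fun t => p1 t - p1 0 - (s - s/(1+t*s))) zero_le_one
      · intro t ht
        have h1 := hφ t ht
        have h2 : HasDerivAt (fun t : ℝ => t * p1 0) (p1 0) t := by
          simpa using (hasDerivAt_id t).mul_const (p1 0)
        have h3 : HasDerivAt (fun t : ℝ => t*s - Real.log (1+t*s)) (s - s/(1+t*s)) t := by
          exact (by simpa using ((hasDerivAt_id t).mul_const s) : HasDerivAt (fun t : ℝ => t * s) s t).sub (hlogder t ht)
        exact (h1.sub h2).sub h3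
      · intro t ht
        have h1ts : 0 < 1 + t * s := by nlinarith [ht.1, hs]
        have heq : s - s/(1+t*s) = s^2 * t/(1+t*s) := by
          rw [eq_div_iff h1ts.ne', sub_mul, div_mul_cancel₀ _ h1ts.ne']
          ring
        rw [heq]
        linarith [mono1 t ht]
    simp only [hz0, hz1] at key
    have hl0 : Real.log (1 + 0 * s) = 0 := by norm_num
    rw [hl0] at key
    have hfd : p1 0 = fderiv ℝ R x h := by rw [hp1def]; simp [hz0]
    rw [← hfd]
    unfold omegaFn
    norm_num at key
    linarith
  · -- part (b)
    have := mono1 1 (by constructor <;> norm_num)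
    have hfd0 : p1 0 = fderiv ℝ R x h := by rw [hp1def]; simp [hz0]
    have hfd1 : p1 1 = fderiv ℝ R y h := by rw [hp1def]; simp [hz1]
    rw [← hfd0, ← hfd1]
    have h2 : s^2 * 1/(1+1*s) = s^2/(1+s) := by norm_num
    linarith


end OftrlAux

/-- the RVU bound for OFTRL under a nondegenerate self-concordant
regularizer `ℛ` (with Hessian `H`). -/
theorem oftrl_selfconcordant_rvu_bound
    (d T : ℕ) (X : Set (Fin d → ℝ))
    (hXne : X.Nonempty) (hXconv : Convex ℝ X) (hXcomp : IsCompact X)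
    (hXint : (interior X).Nonempty)
    (R : (Fin d → ℝ) → ℝ)
    (hRconv : ConvexOn ℝ (interior X) R)
    (hRsmooth : ContDiffOn ℝ 3 R (interior X))
    (H : (Fin d → ℝ) → Matrix (Fin d) (Fin d) ℝ)
    -- `H x` is the Hessian `∇²ℛ(x)` of `ℛ` at `x`:
    (hH : ∀ x ∈ interior X, ∀ v w : Fin d → ℝ,
      iteratedFDeriv ℝ 2 R x ![v, w] = v ⬝ᵥ (H x).mulVec w)
    -- self-concordance differential inequality:
    (hSC : ∀ x ∈ interior X, ∀ v : Fin d → ℝ,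
      |iteratedFDeriv ℝ 3 R x ![v, v, v]| ≤ 2 * (locNorm (H x) v) ^ 3)
    -- barrier property:
    (hBarrier : ∀ z ∈ frontier X, ∀ s : ℕ → Fin d → ℝ,
      (∀ k, s k ∈ interior X) → Filter.Tendsto s Filter.atTop (nhds z) →
      Filter.Tendsto (fun k => R (s k)) Filter.atTop Filter.atTop)
    -- nondegeneracy:
    (hPD : ∀ x ∈ interior X, (H x).PosDef)
    (η : ℝ) (hη : 0 < η)
    (u m : ℕ → Fin d → ℝ)
    (x g : ℕ → Fin d → ℝ)
    -- `x 0 = g 0 = argmin ℛ`, and `ℛ` is normalized so that `min ℛ = 0`: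
    (hx0 : x 0 ∈ interior X) (hg0 : g 0 = x 0)
    (hmin : ∀ y ∈ interior X, R (x 0) ≤ R y)
    (hnorm : R (x 0) = 0)
    -- OFTRL iterates:
    (hx : ∀ t ∈ Finset.Icc 1 T, x t ∈ interior X ∧
      IsMaxOn (fun y => η * (y ⬝ᵥ (m t + ∑ τ ∈ Finset.Icc 1 (t - 1), u τ)) - R y)
        (interior X) (x t))
    -- be-the-leader iterates:
    (hg : ∀ t ∈ Finset.Icc 1 T, g t ∈ interior X ∧
      IsMaxOn (fun y => η * (y ⬝ᵥ ∑ τ ∈ Finset.Icc 1 t, u τ) - R y)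
        (interior X) (g t))
    -- step-size conditions:
    (hcond1 : ∀ t ∈ Finset.Icc 1 T, η * dualNorm (H (x t)) (u t - m t) ≤ 1 / 2)
    (hcond2 : ∀ t ∈ Finset.Icc 1 T, η * dualNorm (H (g (t - 1))) (m t) ≤ 1 / 2)
    (xstar : Fin d → ℝ) (hxstar : xstar ∈ interior X) :
    ∑ t ∈ Finset.Icc 1 T, (xstar - x t) ⬝ᵥ u t ≤
      R xstar / η
      + 2 * η * ∑ t ∈ Finset.Icc 1 T, (dualNorm (H (x t)) (u t - m t)) ^ 2
      - (1 / (4 * η)) * ∑ t ∈ Finset.Icc 1 T,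
          ((locNorm (H (x t)) (x t - g t)) ^ 2
            + (locNorm (H (g (t - 1))) (x t - g (t - 1))) ^ 2) := by
  classical
  set S := interior X with hS
  have hSo : IsOpen S := isOpen_interior
  have hSc : Convex ℝ S := hXconv.interior
  set U : ℕ → Fin d → ℝ := fun t => ∑ τ ∈ Finset.Icc 1 t, u τ with hU
  have hUdef : ∀ t, U t = ∑ τ ∈ Finset.Icc 1 t, u τ := fun t => by rw [hU]
  have hU0 : U 0 = 0 := by simp [hUdef 0]
  have hUsucc : ∀ N : ℕ, U (N+1) = U N + u (N+1) := by
    intro N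
    rw [hUdef, hUdef, Finset.sum_Icc_succ_top (Nat.succ_le_succ (Nat.zero_le N))]
  have hgS : ∀ t, t ≤ T → g t ∈ S := by
    intro t htT
    rcases Nat.eq_zero_or_pos t with rfl | hpos
    · rw [hg0]; exact hx0
    · exact (hg t (Finset.mem_Icc.2 ⟨hpos, htT⟩)).1
  have hgmax : ∀ t, t ≤ T → IsMaxOn (fun y => η * (y ⬝ᵥ U t) - R y) S (g t) := by
    intro t htT
    rcases Nat.eq_zero_or_pos t with rfl | hpos
    · rw [isMaxOn_iff]
      intro y hy
      simp only [hU0, dotProduct_zero, mul_zero, zero_sub, hg0]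
      exact neg_le_neg (hmin y hy)
    · have h2 := (hg t (Finset.mem_Icc.2 ⟨hpos, htT⟩)).2
      rw [← hUdef t] at h2
      exact h2
  have hGg : ∀ t, t ≤ T → ∀ w, fderiv ℝ R (g t) w = η * (w ⬝ᵥ U t) :=
    fun t htT => grad_eq hSo hRsmooth (hgS t htT) (hgmax t htT)
  have hxS : ∀ t ∈ Finset.Icc 1 T, x t ∈ S := fun t ht => (hx t ht).1
  have hGx : ∀ t ∈ Finset.Icc 1 T, ∀ w,
      fderiv ℝ R (x t) w = η * (w ⬝ᵥ (m t + U (t-1))) := by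
    intro t ht
    have h2 := (hx t ht).2
    rw [← hUdef (t-1)] at h2
    exact grad_eq hSo hRsmooth (hxS t ht) h2
  -- gap identity at a maximizer
  have gap : ∀ (v a : Fin d → ℝ), (∀ w, fderiv ℝ R a w = η * (w ⬝ᵥ v)) →
      ∀ y : Fin d → ℝ, η * (y ⬝ᵥ v) - R y
        = (η * (a ⬝ᵥ v) - R a) - (R y - R a - fderiv ℝ R a (y - a)) := by
    intro v a hgrad y
    rw [hgrad (y - a), sub_dotProduct]
    ring
  -- telescoping identity
  have tele : ∀ N, N ≤ T →
      η * (g N ⬝ᵥ U N) - R (g N)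
        = ∑ t ∈ Finset.Icc 1 N, (η * (g t ⬝ᵥ (u t - m t)) + η * (x t ⬝ᵥ m t)
            - (R (g t) - R (x t) - fderiv ℝ R (x t) (g t - x t))
            - (R (x t) - R (g (t-1)) - fderiv ℝ R (g (t-1)) (x t - g (t-1)))) := by
    intro N
    induction N with
    | zero =>
      intro _
      simp [hU0, hg0, hnorm]
    | succ N ih =>
      intro hNT
      have hN : N ≤ T := Nat.le_of_succ_le hNT
      have htmem : N+1 ∈ Finset.Icc 1 T :=
        Finset.mem_Icc.2 ⟨Nat.succ_le_succ (Nat.zero_le N), hNT⟩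
      rw [Finset.sum_Icc_succ_top (Nat.succ_le_succ (Nat.zero_le N)), ← ih hN]
      simp only [Nat.add_sub_cancel]
      have e1 : η * (g (N+1) ⬝ᵥ U (N+1)) - R (g (N+1))
          = (η * (g (N+1) ⬝ᵥ (m (N+1) + U N)) - R (g (N+1)))
            + η * (g (N+1) ⬝ᵥ (u (N+1) - m (N+1))) := by
        rw [hUsucc N, dotProduct_add, dotProduct_add, dotProduct_sub]
        ring
      have hGxN := hGx (N+1) htmem
      simp only [Nat.add_sub_cancel] at hGxN
      have e2 := gap (m (N+1) + U N) (x (N+1)) hGxN (g (N+1))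
      have e3 : η * (x (N+1) ⬝ᵥ (m (N+1) + U N)) - R (x (N+1))
          = (η * (x (N+1) ⬝ᵥ U N) - R (x (N+1))) + η * (x (N+1) ⬝ᵥ m (N+1)) := by
        rw [dotProduct_add]
        ring
      have e4 := gap (U N) (g N) (hGg N hN) (x (N+1))
      linarith [e1, e2, e3, e4]
  -- per-step bound
  have step : ∀ t ∈ Finset.Icc 1 T,
      η * ((g t - x t) ⬝ᵥ (u t - m t))
        - (R (g t) - R (x t) - fderiv ℝ R (x t) (g t - x t))
        - (R (x t) - R (g (t-1)) - fderiv ℝ R (g (t-1)) (x t - g (t-1)))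
      ≤ 2*η^2*(dualNorm (H (x t)) (u t - m t))^2
        - (1/4) * ((locNorm (H (x t)) (x t - g t))^2
            + (locNorm (H (g (t-1))) (x t - g (t-1)))^2) := by
    intro t ht
    obtain ⟨ht1, htT⟩ := Finset.mem_Icc.1 ht
    have htm1T : t - 1 ≤ T := le_trans (Nat.sub_le t 1) htT
    have hxtS : x t ∈ S := hxS t ht
    have hgtS : g t ∈ S := hgS t htT
    have hgt1S : g (t-1) ∈ S := hgS (t-1) htm1T
    have hUt : U t = U (t-1) + u t := by
      obtain ⟨k, rfl⟩ : ∃ k, t = k + 1 := ⟨t - 1, (Nat.succ_pred_eq_of_pos ht1).symm⟩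
      simp only [Nat.add_sub_cancel]
      exact hUsucc k
    set a := dualNorm (H (x t)) (u t - m t) with ha
    have ha0 : 0 ≤ a := dualNorm_nonneg _ _
    set lam1 := η * a with hlam1
    have hlam1le : lam1 ≤ 1/2 := hcond1 t ht
    have hlam10 : 0 ≤ lam1 := mul_nonneg hη.le ha0
    set b := dualNorm (H (g (t-1))) (m t) with hb
    have hb0 : 0 ≤ b := dualNorm_nonneg _ _
    set lam2 := η * b with hlam2
    have hlam2le : lam2 ≤ 1/2 := hcond2 t ht
    have hlam20 : 0 ≤ lam2 := mul_nonneg hη.le hb0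
    have sc1 := sc_key hSo hSc hRsmooth hH hSC hPD hxtS hgtS
    have sc2 := sc_key hSo hSc hRsmooth hH hSC hPD hgt1S hxtS
    set s1 := locNorm (H (x t)) (g t - x t) with hs1
    set s2 := locNorm (H (g (t-1))) (x t - g (t-1)) with hs2
    have hs10 : 0 ≤ s1 := locNorm_nonneg _ _
    have hs20 : 0 ≤ s2 := locNorm_nonneg _ _
    -- newton bound for s1
    have hgrad1 : fderiv ℝ R (g t) (g t - x t) - fderiv ℝ R (x t) (g t - x t)
        = η * ((g t - x t) ⬝ᵥ (u t - m t)) := by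
      rw [hGg t htT, hGx t ht, hUt, dotProduct_add, dotProduct_add, dotProduct_sub]
      ring
    have hcs1 : (u t - m t) ⬝ᵥ (g t - x t) ≤ a * s1 :=
      cauchy_schwarz_quad (hPD _ hxtS) _ _
    have hkey1 : s1^2/(1+s1) ≤ lam1 * s1 := by
      have h2 := sc1.2
      rw [hgrad1] at h2
      have h3 : η * ((g t - x t) ⬝ᵥ (u t - m t)) ≤ lam1 * s1 := by
        rw [dotProduct_comm, hlam1]
        calc η * ((u t - m t) ⬝ᵥ (g t - x t)) ≤ η * (a * s1) :=
              mul_le_mul_of_nonneg_left hcs1 hη.le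
          _ = η * a * s1 := by ring
      linarith
    have hn1 : s1 ≤ 2 * lam1 := newton_bound hs10 hlam10 hlam1le hkey1
    have hs1le1 : s1 ≤ 1 := by linarith
    -- newton bound for s2
    have hgrad2 : fderiv ℝ R (x t) (x t - g (t-1)) - fderiv ℝ R (g (t-1)) (x t - g (t-1))
        = η * ((x t - g (t-1)) ⬝ᵥ m t) := by
      rw [hGg (t-1) htm1T, hGx t ht, dotProduct_add]
      ring
    have hcs2 : m t ⬝ᵥ (x t - g (t-1)) ≤ b * s2 :=
      cauchy_schwarz_quad (hPD _ hgt1S) _ _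
    have hkey2 : s2^2/(1+s2) ≤ lam2 * s2 := by
      have h2 := sc2.2
      rw [hgrad2] at h2
      have h3 : η * ((x t - g (t-1)) ⬝ᵥ m t) ≤ lam2 * s2 := by
        rw [dotProduct_comm, hlam2]
        calc η * (m t ⬝ᵥ (x t - g (t-1))) ≤ η * (b * s2) :=
              mul_le_mul_of_nonneg_left hcs2 hη.le
          _ = η * b * s2 := by ring
      linarith
    have hn2 : s2 ≤ 2 * lam2 := newton_bound hs20 hlam20 hlam2le hkey2
    have hs2le1 : s2 ≤ 1 := by linarith
    -- divergence lower bounds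
    have hd1 : s1^2/4 ≤ R (g t) - R (x t) - fderiv ℝ R (x t) (g t - x t) :=
      le_trans (omega_quarter hs10 hs1le1) sc1.1
    have hd2 : s2^2/4 ≤ R (x t) - R (g (t-1)) - fderiv ℝ R (g (t-1)) (x t - g (t-1)) :=
      le_trans (omega_quarter hs20 hs2le1) sc2.1
    -- cross term
    have hcross : η * ((g t - x t) ⬝ᵥ (u t - m t)) ≤ 2*η^2*a^2 := by
      rw [dotProduct_comm]
      calc η * ((u t - m t) ⬝ᵥ (g t - x t)) ≤ η * (a * s1) :=
            mul_le_mul_of_nonneg_left hcs1 hη.le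
        _ = lam1 * s1 := by rw [hlam1]; ring
        _ ≤ lam1 * (2 * lam1) := mul_le_mul_of_nonneg_left hn1 hlam10
        _ = 2*η^2*a^2 := by rw [hlam1]; ring
    have hflip : locNorm (H (x t)) (x t - g t) = s1 := by
      rw [hs1, locNorm_sub_comm]
    rw [hflip]
    linarith [hd1, hd2, hcross]
  -- assemble
  have hstar : η * (xstar ⬝ᵥ U T) - R xstar ≤ η * (g T ⬝ᵥ U T) - R (g T) :=
    (isMaxOn_iff.1 (hgmax T le_rfl)) xstar hxstar
  have hsum1 : ∑ t ∈ Finset.Icc 1 T, η * ((xstar - x t) ⬝ᵥ u t)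
      = η * (xstar ⬝ᵥ U T) - ∑ t ∈ Finset.Icc 1 T, η * (x t ⬝ᵥ u t) := by
    rw [hUdef T, dot_sum, Finset.mul_sum, ← Finset.sum_sub_distrib]
    refine Finset.sum_congr rfl fun t _ => ?_
    rw [sub_dotProduct]
    ring
  have hsum2 : ∑ t ∈ Finset.Icc 1 T, (η * (g t ⬝ᵥ (u t - m t)) + η * (x t ⬝ᵥ m t)
          - (R (g t) - R (x t) - fderiv ℝ R (x t) (g t - x t))
          - (R (x t) - R (g (t-1)) - fderiv ℝ R (g (t-1)) (x t - g (t-1))))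
        - ∑ t ∈ Finset.Icc 1 T, η * (x t ⬝ᵥ u t)
      = ∑ t ∈ Finset.Icc 1 T, (η * ((g t - x t) ⬝ᵥ (u t - m t))
          - (R (g t) - R (x t) - fderiv ℝ R (x t) (g t - x t))
          - (R (x t) - R (g (t-1)) - fderiv ℝ R (g (t-1)) (x t - g (t-1)))) := by
    rw [← Finset.sum_sub_distrib]
    refine Finset.sum_congr rfl fun t _ => ?_
    rw [sub_dotProduct, dotProduct_sub, dotProduct_sub]
    ring
  have hsumle := Finset.sum_le_sum step
  have hmain : η * (∑ t ∈ Finset.Icc 1 T, (xstar - x t) ⬝ᵥ u t)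
      ≤ R xstar + ∑ t ∈ Finset.Icc 1 T, (2*η^2*(dualNorm (H (x t)) (u t - m t))^2
          - (1/4) * ((locNorm (H (x t)) (x t - g t))^2
              + (locNorm (H (g (t-1))) (x t - g (t-1)))^2)) := by
    have h1 : η * (∑ t ∈ Finset.Icc 1 T, (xstar - x t) ⬝ᵥ u t)
        = ∑ t ∈ Finset.Icc 1 T, η * ((xstar - x t) ⬝ᵥ u t) := Finset.mul_sum _ _ _
    rw [h1, hsum1]
    have h2 := tele T le_rfl
    linarith [hstar, h2, hsum2, hsumle]
  -- final algebra
  have hsplit : ∑ t ∈ Finset.Icc 1 T, (2*η^2*(dualNorm (H (x t)) (u t - m t))^2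
          - (1/4) * ((locNorm (H (x t)) (x t - g t))^2
              + (locNorm (H (g (t-1))) (x t - g (t-1)))^2))
      = 2*η^2 * (∑ t ∈ Finset.Icc 1 T, (dualNorm (H (x t)) (u t - m t))^2)
        - (1/4) * ∑ t ∈ Finset.Icc 1 T, ((locNorm (H (x t)) (x t - g t))^2
              + (locNorm (H (g (t-1))) (x t - g (t-1)))^2) := by
    rw [Finset.mul_sum, Finset.mul_sum, ← Finset.sum_sub_distrib]
  rw [hsplit] at hmain
  set Reg := ∑ t ∈ Finset.Icc 1 T, (xstar - x t) ⬝ᵥ u t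
  set A := ∑ t ∈ Finset.Icc 1 T, (dualNorm (H (x t)) (u t - m t))^2
  set B := ∑ t ∈ Finset.Icc 1 T, ((locNorm (H (x t)) (x t - g t))^2
              + (locNorm (H (g (t-1))) (x t - g (t-1)))^2)
  have hfinal : Reg ≤ (R xstar + 2*η^2*A - (1/4)*B)/η := by
    rw [le_div_iff₀ hη]
    nlinarith [hmain]
  have heq : (R xstar + 2*η^2*A - (1/4)*B)/η
      = R xstar / η + 2*η*A - (1/(4*η))*B := by
    field_simp
  linarith [heq ▸ hfinal]
end

section
/- For every x ∈ int(Δ°) and every u ∈ ℝ^d, define ũ ∈ ℝ^{d−1} by ũ[r] = u[r] − u[d] for r ∈ [d−1]. Then the inverse Hessian of the log-barrier regularizer satisfies ũᵀ (∇²ℛ(x))⁻¹ ũ = ∑_{r=1}^d x[r]² (u[r] − c*)² = ∑_{r=1}^d x[r]² u[r]² − (∑_{r=1}^d x[r]² u[r])² / (∑_{r=1}^d x[r]²), where c* = (∑_{r=1}^d x[r]² u[r]) / (∑_{r=1}^d x[r]²) and x[d] = 1 − ∑_{r=1}^{d−1} x[r]; moreover, c* minimizes the map c ↦ ∑_{r=1}^d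 x[r]² (u[r] − c)² over c ∈ ℝ. -/
open Finset Matrix

section Hess

variable (e : ℕ)

noncomputable def Pr (r : Fin e) : (Fin e → ℝ) →L[ℝ] ℝ := ContinuousLinearMap.proj r

noncomputable def Ls : (Fin e → ℝ) →L[ℝ] ℝ := ∑ r, Pr e r

lemma logbarrier_hess (x : Fin e → ℝ) (hx1 : ∀ r, 0 < x r)
    (hx2 : ∑ r, x r < 1) (i j : Fin e) :
    iteratedFDeriv ℝ 2 (fun z : Fin e → ℝ =>
        -(∑ r, Real.log (z r)) - Real.log (1 - ∑ r, z r)) x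
      ![Pi.single i 1, Pi.single j 1]
    = (if i = j then (x i ^ 2)⁻¹ else 0) + ((1 - ∑ r, x r) ^ 2)⁻¹ := by
  classical
  set R : (Fin e → ℝ) → ℝ :=
    fun z => -(∑ r, Real.log (z r)) - Real.log (1 - ∑ r, z r) with hR
  set U : Set (Fin e → ℝ) := {z | (∀ r, 0 < z r) ∧ ∑ r, z r < 1} with hUdef
  have hU : IsOpen U := by
    have : U = (⋂ r, {z : Fin e → ℝ | 0 < z r}) ∩ {z | ∑ r, z r < 1} := by
      ext z; simp [hUdef, Set.mem_iInter]
    rw [this]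
    exact (isOpen_iInter_of_finite fun r =>
      isOpen_lt continuous_const (continuous_apply r)).inter
      (isOpen_lt (continuous_finset_sum _ fun r _ => continuous_apply r) continuous_const)
  set D1 : (Fin e → ℝ) → ((Fin e → ℝ) →L[ℝ] ℝ) :=
    fun z => (∑ r, (-(z r)⁻¹) • Pr e r) + (1 - ∑ r, z r)⁻¹ • Ls e with hD1def
  have hsum : ∀ z : Fin e → ℝ, HasFDerivAt (fun w : Fin e → ℝ => ∑ r, w r) (Ls e) z := by
    intro z
    exact HasFDerivAt.fun_sum fun r _ => (Pr e r).hasFDerivAt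
  have hD1 : ∀ z ∈ U, HasFDerivAt R (D1 z) z := by
    intro z hz
    have h1 : ∀ r : Fin e, HasFDerivAt (fun w : Fin e → ℝ => Real.log (w r))
        ((z r)⁻¹ • Pr e r) z :=
      fun r => (Pr e r).hasFDerivAt.log (ne_of_gt (hz.1 r))
    have h2 : HasFDerivAt (fun w : Fin e → ℝ => Real.log (1 - ∑ r, w r))
        ((1 - ∑ r, z r)⁻¹ • ((0 : (Fin e → ℝ) →L[ℝ] ℝ) - Ls e)) z :=
      ((hasFDerivAt_const (1 : ℝ) z).sub (hsum z)).log
        (ne_of_gt (sub_pos.mpr hz.2))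
    have h := ((HasFDerivAt.fun_sum fun r (_ : r ∈ univ) => h1 r).neg).sub h2
    refine h.congr_fderiv (Eq.symm ?_)
    ext w
    simp [hD1def, ContinuousLinearMap.sum_apply, Pr, Finset.sum_neg_distrib, neg_mul,
      mul_comm]
  have ht : (0:ℝ) < 1 - ∑ r, x r := sub_pos.mpr hx2
  set D2 : (Fin e → ℝ) →L[ℝ] ((Fin e → ℝ) →L[ℝ] ℝ) :=
    (∑ r, (((x r) ^ 2)⁻¹ • Pr e r).smulRight (Pr e r))
      + ((((1 - ∑ r, x r) ^ 2)⁻¹ • Ls e).smulRight (Ls e)) with hD2def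
  have hD2 : HasFDerivAt D1 D2 x := by
    have hterm : ∀ r : Fin e, HasFDerivAt (fun z : Fin e → ℝ => (-(z r)⁻¹) • Pr e r)
        ((((x r) ^ 2)⁻¹ • Pr e r).smulRight (Pr e r)) x := by
      intro r
      have hinv : HasFDerivAt (fun z : Fin e → ℝ => (z r)⁻¹)
          ((-(x r ^ 2)⁻¹) • Pr e r) x :=
        (hasDerivAt_inv (ne_of_gt (hx1 r))).comp_hasFDerivAt x (Pr e r).hasFDerivAt
      have := hinv.neg.smul_const (Pr e r)
      refine this.congr_fderiv (Eq.symm ?_)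
      ext v w
      simp [Pr]
    have hs2 : HasFDerivAt (fun z : Fin e → ℝ => (1 - ∑ r, z r)⁻¹ • Ls e)
        ((((1 - ∑ r, x r) ^ 2)⁻¹ • Ls e).smulRight (Ls e)) x := by
      have hinv : HasFDerivAt (fun z : Fin e → ℝ => (1 - ∑ r, z r)⁻¹)
          ((-((1 - ∑ r, x r) ^ 2)⁻¹) • ((0 : (Fin e → ℝ) →L[ℝ] ℝ) - Ls e)) x :=
        (hasDerivAt_inv (ne_of_gt ht)).comp_hasFDerivAt x
          ((hasFDerivAt_const (1 : ℝ) x).sub (hsum x))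
      have := hinv.smul_const (Ls e)
      refine this.congr_fderiv (Eq.symm ?_)
      ext v w
      simp [mul_comm]
    exact (HasFDerivAt.fun_sum fun r (_ : r ∈ univ) => hterm r).add hs2
  have hxU : x ∈ U := ⟨hx1, hx2⟩
  have hev : fderiv ℝ R =ᶠ[nhds x] D1 := by
    filter_upwards [hU.mem_nhds hxU] with z hz using (hD1 z hz).fderiv
  have key : iteratedFDeriv ℝ 2 R x ![Pi.single i 1, Pi.single j 1]
      = D2 (Pi.single i 1) (Pi.single j 1) := by
    rw [iteratedFDeriv_two_apply]
    simp only [Matrix.cons_val_zero, Matrix.cons_val_one, Matrix.head_cons]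
    rw [hev.fderiv_eq, hD2.fderiv]
  rw [key, hD2def]
  simp only [ContinuousLinearMap.add_apply, ContinuousLinearMap.sum_apply,
    ContinuousLinearMap.smulRight_apply, ContinuousLinearMap.smul_apply, Pr,
    ContinuousLinearMap.proj_apply, Ls, smul_eq_mul]
  have hL : ∀ k : Fin e, (∑ r, ContinuousLinearMap.proj (R := ℝ)
      (φ := fun _ : Fin e => ℝ) r) (Pi.single k 1) = 1 := by
    intro k
    simp [ContinuousLinearMap.sum_apply, Pi.single_apply]
  have h1 : ∀ k : Fin e, (∑ r : Fin e, (Pi.single k (1:ℝ) : Fin e → ℝ) r) = 1 := by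
    intro k; simp [Pi.single_apply]
  rw [h1 i, h1 j]
  have h2 : ∑ r : Fin e, (x r ^ 2)⁻¹ * (Pi.single i (1:ℝ) : Fin e → ℝ) r * (Pi.single j (1:ℝ) : Fin e → ℝ) r
      = if i = j then (x i ^ 2)⁻¹ else 0 := by
    rw [Finset.sum_eq_single i]
    · by_cases h : i = j <;> simp [Pi.single_apply, h]
    · intro b _ hb; simp [Pi.single_apply, Ne.symm hb]
    · simp
  rw [h2]; ring

end Hess


lemma alg_diag (a τ Sv : ℝ) (ha : a ≠ 0) (hτ : τ ≠ 0) (hSv : Sv ≠ 0) :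
    (a ^ 2)⁻¹ * (a ^ 2 - a ^ 2 * a ^ 2 / Sv)
      + ((τ ^ 2)⁻¹ * a ^ 2 - (τ ^ 2)⁻¹ * a ^ 2 / Sv * (Sv - τ ^ 2)) = 1 := by
  field_simp
  ring

lemma alg_off (a b τ Sv : ℝ) (ha : a ≠ 0) (hτ : τ ≠ 0) (hSv : Sv ≠ 0) :
    (a ^ 2)⁻¹ * (0 - a ^ 2 * b ^ 2 / Sv)
      + ((τ ^ 2)⁻¹ * b ^ 2 - (τ ^ 2)⁻¹ * b ^ 2 / Sv * (Sv - τ ^ 2)) = 0 := by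
  field_simp
  ring

lemma alg_final (T P Q A B ul cc : ℝ) (hQ0 : 0 < Q)
    (hA : A = T - 2 * ul * P + ul ^ 2 * Q) (hB : B = P - ul * Q)
    (hc : cc = P / Q) :
    (A - B ^ 2 / Q = T - 2 * cc * P + cc ^ 2 * Q)
      ∧ (A - B ^ 2 / Q = T - P ^ 2 / Q)
      ∧ ∀ c' : ℝ, T - 2 * cc * P + cc ^ 2 * Q ≤ T - 2 * c' * P + c' ^ 2 * Q := by
  have hQ : Q ≠ 0 := ne_of_gt hQ0
  subst hA hB hc
  refine ⟨by field_simp; ring, by field_simp; ring, fun c' => ?_⟩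
  have h1 : (T - 2 * c' * P + c' ^ 2 * Q) - (T - 2 * (P / Q) * P + (P / Q) ^ 2 * Q)
      = (c' * Q - P) ^ 2 / Q := by field_simp; ring
  have h2 : (0:ℝ) ≤ (c' * Q - P) ^ 2 / Q := div_nonneg (sq_nonneg _) hQ0.le
  linarith


/-- with `e = d − 1`, `d ≥ 2`: for `x` in the interior of
`Δ° = {x ∈ ℝ^{d−1} : x ≥ 0, ∑ x[r] ≤ 1}` and `u ∈ ℝ^d`, setting
`ũ[r] = u[r] − u[d]` for `r < d`, the inverse Hessian of the log-barrier
`ℛ(x) = −∑_{r<d} log x[r] − log(1 − ∑_{r<d} x[r])` satisfies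
`ũᵀ (∇²ℛ(x))⁻¹ ũ = ∑_{r=1}^d x[r]²(u[r] − c*)²
  = ∑_r x[r]²u[r]² − (∑_r x[r]²u[r])²/(∑_r x[r]²)`,
where `c* = (∑_r x[r]²u[r])/(∑_r x[r]²)`, `x[d] = 1 − ∑_{r<d} x[r]`, and `c*`
minimizes `c ↦ ∑_r x[r]²(u[r] − c)²`. -/
theorem logbarrier_inverse_hessian_dual_norm (e : ℕ) (he : 1 ≤ e)
    (x : Fin e → ℝ) (hx1 : ∀ r, 0 < x r) (hx2 : ∑ r, x r < 1)
    (u : Fin (e + 1) → ℝ) :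
    let R : (Fin e → ℝ) → ℝ :=
      fun z => -(∑ r, Real.log (z r)) - Real.log (1 - ∑ r, z r)
    let Hm : Matrix (Fin e) (Fin e) ℝ :=
      Matrix.of fun i j => iteratedFDeriv ℝ 2 R x ![Pi.single i 1, Pi.single j 1]
    let xf : Fin (e + 1) → ℝ := Fin.snoc x (1 - ∑ r, x r)
    let ut : Fin e → ℝ := fun r => u r.castSucc - u (Fin.last e)
    let c : ℝ := (∑ r, xf r ^ 2 * u r) / (∑ r, xf r ^ 2)
    (ut ⬝ᵥ Hm⁻¹.mulVec ut = ∑ r, xf r ^ 2 * (u r - c) ^ 2)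
      ∧ (ut ⬝ᵥ Hm⁻¹.mulVec ut
          = (∑ r, xf r ^ 2 * u r ^ 2) - (∑ r, xf r ^ 2 * u r) ^ 2 / (∑ r, xf r ^ 2))
      ∧ ∀ c' : ℝ, ∑ r, xf r ^ 2 * (u r - c) ^ 2 ≤ ∑ r, xf r ^ 2 * (u r - c') ^ 2 := by
  classical
  intro R Hm xf ut c
  set t : ℝ := 1 - ∑ r, x r with htdef
  have ht : 0 < t := sub_pos.mpr hx2
  set S : ℝ := t ^ 2 + ∑ r, x r ^ 2 with hSdef
  have hS : 0 < S := by
    have h1 : (0:ℝ) < t ^ 2 := by positivity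
    have h2 : (0:ℝ) ≤ ∑ r, x r ^ 2 := Finset.sum_nonneg fun r _ => sq_nonneg _
    linarith
  have hxne : ∀ r, x r ≠ 0 := fun r => ne_of_gt (hx1 r)
  have hHm : Hm = Matrix.of (fun i j =>
      (if i = j then (x i ^ 2)⁻¹ else 0) + (t ^ 2)⁻¹) := by
    ext i j
    show iteratedFDeriv ℝ 2 R x ![Pi.single i 1, Pi.single j 1] = _
    exact logbarrier_hess e x hx1 hx2 i j
  set M : Matrix (Fin e) (Fin e) ℝ :=
    Matrix.of (fun i j => (if i = j then x i ^ 2 else 0) - x i ^ 2 * x j ^ 2 / S)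
    with hMdef
  have hMul : Hm * M = 1 := by
    ext i j
    rw [hHm]
    simp only [Matrix.mul_apply, Matrix.of_apply, Matrix.one_apply, hMdef]
    have hterm : ∀ k : Fin e,
        ((if i = k then (x i ^ 2)⁻¹ else 0) + (t ^ 2)⁻¹)
          * ((if k = j then x k ^ 2 else 0) - x k ^ 2 * x j ^ 2 / S)
        = ((if i = k then (x i ^ 2)⁻¹ * ((if k = j then x k ^ 2 else 0)
              - x k ^ 2 * x j ^ 2 / S) else 0)
          + ((t ^ 2)⁻¹ * (if k = j then x k ^ 2 else 0)
              - (t ^ 2)⁻¹ * x j ^ 2 / S * x k ^ 2)) := by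
      intro k
      split_ifs <;> ring
    rw [Finset.sum_congr rfl fun k _ => hterm k, Finset.sum_add_distrib,
      Finset.sum_ite_eq, Finset.sum_sub_distrib, ← Finset.mul_sum, ← Finset.mul_sum]
    simp only [Finset.mem_univ, if_true]
    rw [Finset.sum_ite_eq' univ j (fun k => x k ^ 2)]
    simp only [Finset.mem_univ, if_true]
    have hsum : ∑ r, x r ^ 2 = S - t ^ 2 := by rw [hSdef]; ring
    rw [hsum]
    by_cases h : i = j
    · subst h
      simp only [if_pos rfl]
      exact alg_diag (x i) t S (hxne i) (ne_of_gt ht) (ne_of_gt hS)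
    · simp only [if_neg h]
      exact alg_off (x i) (x j) t S (hxne i) (ne_of_gt ht) (ne_of_gt hS)
  have hInv : Hm⁻¹ = M := Matrix.inv_eq_right_inv hMul
  -- quadratic form
  set B : ℝ := ∑ i, x i ^ 2 * ut i with hBdef
  set A : ℝ := ∑ i, x i ^ 2 * ut i ^ 2 with hAdef
  have hrow : ∀ i, (M.mulVec ut) i = x i ^ 2 * ut i - x i ^ 2 / S * B := by
    intro i
    simp only [Matrix.mulVec, dotProduct, hMdef, Matrix.of_apply, sub_mul,
      Finset.sum_sub_distrib, ite_mul, zero_mul, Finset.sum_ite_eq,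
      Finset.mem_univ, if_true]
    congr 1
    rw [hBdef, Finset.mul_sum]
    exact Finset.sum_congr rfl fun k _ => by ring
  have hquad : ut ⬝ᵥ Hm⁻¹.mulVec ut = A - B ^ 2 / S := by
    rw [hInv]
    simp only [dotProduct]
    rw [Finset.sum_congr rfl fun i (_ : i ∈ univ) => by rw [hrow i]]
    have : ∀ i : Fin e, ut i * (x i ^ 2 * ut i - x i ^ 2 / S * B)
        = x i ^ 2 * ut i ^ 2 - B / S * (x i ^ 2 * ut i) := fun i => by ring
    rw [Finset.sum_congr rfl fun i _ => this i, Finset.sum_sub_distrib,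
      ← Finset.mul_sum, ← hAdef, ← hBdef]
    ring
  -- translation to xf sums
  set Q : ℝ := ∑ r, xf r ^ 2 with hQdef
  set P : ℝ := ∑ r, xf r ^ 2 * u r with hPdef
  set T : ℝ := ∑ r, xf r ^ 2 * u r ^ 2 with hTdef
  set ul : ℝ := u (Fin.last e) with huldef
  have hxfc : ∀ i : Fin e, xf i.castSucc = x i := fun i => Fin.snoc_castSucc _ _ _
  have hxfl : xf (Fin.last e) = t := Fin.snoc_last _ _
  have hQS : Q = S := by
    rw [hQdef, Fin.sum_univ_castSucc]
    simp only [hxfc, hxfl]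
    rw [hSdef]; ring
  have hQ0 : 0 < Q := by rw [hQS]; exact hS
  have hB : B = P - ul * Q := by
    have h1 : P - ul * Q = ∑ r : Fin (e + 1), xf r ^ 2 * (u r - ul) := by
      rw [hPdef, hQdef, Finset.mul_sum, ← Finset.sum_sub_distrib]
      exact Finset.sum_congr rfl fun r _ => by ring
    rw [h1, Fin.sum_univ_castSucc]
    simp only [hxfc, hxfl, huldef, sub_self, mul_zero, add_zero]
    all_goals rw [hBdef]
  have hA : A = T - 2 * ul * P + ul ^ 2 * Q := by
    have h1 : T - 2 * ul * P + ul ^ 2 * Q = ∑ r : Fin (e + 1), xf r ^ 2 * (u r - ul) ^ 2 := by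
      rw [hTdef, hPdef, hQdef, Finset.mul_sum, Finset.mul_sum, ← Finset.sum_sub_distrib,
        ← Finset.sum_add_distrib]
      exact Finset.sum_congr rfl fun r _ => by ring
    rw [h1, Fin.sum_univ_castSucc]
    simp only [hxfc, hxfl, huldef, sub_self]
    all_goals (rw [hAdef]; norm_num [ut])
  have hc : c = P / Q := rfl
  have expand : ∀ c' : ℝ, ∑ r, xf r ^ 2 * (u r - c') ^ 2 = T - 2 * c' * P + c' ^ 2 * Q := by
    intro c'
    rw [hTdef, hPdef, hQdef, Finset.mul_sum, Finset.mul_sum, ← Finset.sum_sub_distrib,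
      ← Finset.sum_add_distrib]
    exact Finset.sum_congr rfl fun r _ => by ring
  obtain ⟨g1, g2, g3⟩ := alg_final T P Q A B ul c hQ0 hA hB hc
  refine ⟨?_, ?_, ?_⟩
  · rw [hquad, ← hQS, expand c]; exact g1
  · rw [hquad, ← hQS]; exact g2
  · intro c'
    rw [expand c, expand c']
    exact g3 c'
end

section
/- Suppose η ≤ 1/16. Then the log-barrier OFTRL iterates are multiplicatively stable: for every t with 2 ≤ t ≤ T, √( ∑_{r=1}^d (1 − x^(t)[r]/x^(t−1)[r])² ) ≤ 6η‖u^(t−1)‖_∞ + 2η‖u^(t−2)‖_∞. -/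
open Finset Matrix

/-- The relative interior of the probability simplex on `A`: strictly positive
probability vectors. -/
def simplexInterior (A : Type*) [Fintype A] : Set (A → ℝ) :=
  {x | (∀ a, 0 < x a) ∧ ∑ a, x a = 1}

open Filter Set in
lemma foc {d : ℕ} (U : Fin d → ℝ) (η : ℝ) (x y : Fin d → ℝ)
    (hx : x ∈ simplexInterior (Fin d)) (hy : y ∈ simplexInterior (Fin d))
    (hmax : IsMaxOn (fun z => η * (z ⬝ᵥ U) + ∑ r, Real.log (z r))
      (simplexInterior (Fin d)) x) :
    η * (∑ r, (y r - x r) * U r) + ∑ r, (y r - x r) / x r ≤ 0 := by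
  set D : ℝ := η * (∑ r, (y r - x r) * U r) + ∑ r, (y r - x r) / x r with hDdef
  set φ : ℝ → ℝ := fun s => η * (∑ r, (x r + s * (y r - x r)) * U r)
      + ∑ r, Real.log (x r + s * (y r - x r)) with hφdef
  have h1 : ∀ r : Fin d, HasDerivAt (fun s : ℝ => x r + s * (y r - x r)) (y r - x r) 0 := by
    intro r
    simpa using ((hasDerivAt_id (0:ℝ)).mul_const (y r - x r)).const_add (x r)
  have hD : HasDerivAt φ D 0 := by
    apply HasDerivAt.add
    · have : HasDerivAt (fun s : ℝ => ∑ r, (x r + s * (y r - x r)) * U r)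
          (∑ r : Fin d, (y r - x r) * U r) 0 :=
        HasDerivAt.fun_sum (fun r _ => (h1 r).mul_const (U r))
      exact this.const_mul η
    · apply HasDerivAt.fun_sum
      intro r _
      have := (h1 r).log (by simpa using (hx.1 r).ne')
      simpa using this
  have hmem : ∀ s ∈ Set.Ioc (0:ℝ) 1,
      (fun r => x r + s * (y r - x r)) ∈ simplexInterior (Fin d) := by
    intro s hs
    constructor
    · intro r
      have hxr := hx.1 r
      have hyr := hy.1 r
      have h2 : 0 ≤ (1 - s) * x r := mul_nonneg (by linarith [hs.2]) hxr.le
      have h3 : 0 < s * y r := mul_pos hs.1 hyr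
      have : x r + s * (y r - x r) = (1 - s) * x r + s * y r := by ring
      simp only []; show 0 < x r + s * (y r - x r); rw [this]; linarith
    · have : ∑ r, (x r + s * (y r - x r)) = ∑ r, x r + s * (∑ r, y r - ∑ r, x r) := by
        rw [Finset.sum_add_distrib, ← Finset.mul_sum, Finset.sum_sub_distrib]
      rw [this, hx.2, hy.2]; ring
  have hφle : ∀ s ∈ Set.Ioc (0:ℝ) 1, φ s ≤ φ 0 := by
    intro s hs
    have := hmax (hmem s hs)
    simpa [φ, dotProduct] using this
  have hslope : Tendsto (slope φ 0) (nhdsWithin 0 (Set.Ioi 0)) (nhds D) := by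
    have := hD.hasDerivWithinAt (s := Set.Ioi (0:ℝ))
    rw [hasDerivWithinAt_iff_tendsto_slope] at this
    simpa [Set.diff_singleton_eq_self, Set.notMem_Ioi] using this
  refine le_of_tendsto hslope ?_
  filter_upwards [Ioc_mem_nhdsGT_of_mem (Set.mem_Ico.2 ⟨le_refl (0:ℝ), one_pos⟩)] with s hs
  have := hφle s hs
  have hs0 : (0:ℝ) < s := hs.1
  rw [slope_def_field]
  simp only [sub_zero]
  exact div_nonpos_of_nonpos_of_nonneg (by linarith) hs0.le

set_option maxHeartbeats 1000000 in
/-- multiplicative stability of log-barrier OFTRL iterates on the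
probability simplex `Δ^d` (prediction `m^(t) = u^(t−1)`, learning rate
`η ≤ 1/16`): for `2 ≤ t ≤ T`,
`√(∑_r (1 − x^(t)[r]/x^(t−1)[r])²) ≤ 6η‖u^(t−1)‖_∞ + 2η‖u^(t−2)‖_∞`. -/
theorem logbarrier_oftrl_multiplicative_stability (d : ℕ) (hd : 2 ≤ d)
    (η : ℝ) (hη0 : 0 < η) (hη : η ≤ 1 / 16)
    (T : ℕ) (u : ℕ → Fin d → ℝ)
    (hu : ∀ t ≤ T, ∀ r, |u t r| ≤ 1)
    (x : ℕ → Fin d → ℝ)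
    (hx0 : x 0 = fun _ => (d : ℝ)⁻¹)
    (hx : ∀ t ∈ Finset.Icc 1 T, x t ∈ simplexInterior (Fin d) ∧
      IsMaxOn (fun y => η * (y ⬝ᵥ (u (t - 1) + ∑ τ ∈ Finset.Icc 1 (t - 1), u τ))
          + ∑ r, Real.log (y r))
        (simplexInterior (Fin d)) (x t)) :
    ∀ t : ℕ, 2 ≤ t → t ≤ T →
      Real.sqrt (∑ r, (1 - x t r / x (t - 1) r) ^ 2) ≤
        6 * η * (⨆ r : Fin d, |u (t - 1) r|) + 2 * η * (⨆ r : Fin d, |u (t - 2) r|) := by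
  intro t ht2 htT
  obtain ⟨k, rfl⟩ : ∃ k, t = k + 2 := ⟨t - 2, by omega⟩
  show Real.sqrt (∑ r, (1 - x (k+2) r / x (k+1) r) ^ 2) ≤
        6 * η * (⨆ r : Fin d, |u (k+1) r|) + 2 * η * (⨆ r : Fin d, |u k r|)
  have hmem2 : k + 2 ∈ Finset.Icc 1 T := by simp; omega
  have hmem1 : k + 1 ∈ Finset.Icc 1 T := by simp; omega
  obtain ⟨hX, hmaxX⟩ := hx (k+2) hmem2
  obtain ⟨hY, hmaxY⟩ := hx (k+1) hmem1
  set X : Fin d → ℝ := x (k+2) with hXdef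
  set Y : Fin d → ℝ := x (k+1) with hYdef
  set U2 : Fin d → ℝ := u (k+1) + ∑ τ ∈ Finset.Icc 1 (k+1), u τ with hU2
  set U1 : Fin d → ℝ := u k + ∑ τ ∈ Finset.Icc 1 k, u τ with hU1
  have hA : η * (∑ r, (Y r - X r) * U2 r) + ∑ r, (Y r - X r) / X r ≤ 0 :=
    foc U2 η X Y hX hY hmaxX
  have hB : η * (∑ r, (X r - Y r) * U1 r) + ∑ r, (X r - Y r) / Y r ≤ 0 :=
    foc U1 η Y X hY hX hmaxY
  set v : Fin d → ℝ := fun r => 2 * u (k+1) r - u k r with hv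
  set Q : ℝ := ∑ r, (X r - Y r) ^ 2 / (X r * Y r) with hQ
  have hXpos : ∀ r, 0 < X r := hX.1
  have hYpos : ∀ r, 0 < Y r := hY.1
  have hQ0 : 0 ≤ Q :=
    Finset.sum_nonneg fun r _ => div_nonneg (sq_nonneg _)
      (mul_pos (hXpos r) (hYpos r)).le
  have hUdiff : ∀ r, U2 r - U1 r = v r := by
    intro r
    simp only [hU2, hU1, hv, Pi.add_apply, Finset.sum_apply,
      Finset.sum_Icc_succ_top (Nat.le_add_left 1 k)]
    ring
  have key : Q ≤ η * ∑ r, (X r - Y r) * v r := by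
    have hsum1 : ∑ r, (Y r - X r) / X r + ∑ r, (X r - Y r) / Y r = Q := by
      rw [← Finset.sum_add_distrib]
      refine Finset.sum_congr rfl fun r _ => ?_
      have hp := hXpos r; have hq := hYpos r
      field_simp
      ring
    have hsum2 : ∑ r, (Y r - X r) * U2 r + ∑ r, (X r - Y r) * U1 r
        = - ∑ r, (X r - Y r) * v r := by
      rw [← Finset.sum_add_distrib, ← Finset.sum_neg_distrib]
      refine Finset.sum_congr rfl fun r _ => ?_
      linear_combination (Y r - X r) * hUdiff r
    nlinarith [hA, hB]
  -- bounds on v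
  have r0 : Fin d := ⟨0, by omega⟩
  haveI : Nonempty (Fin d) := ⟨r0⟩
  set a : ℝ := ⨆ r : Fin d, |u (k+1) r| with ha
  set b : ℝ := ⨆ r : Fin d, |u k r| with hb
  have hbdd1 : BddAbove (Set.range fun r : Fin d => |u (k+1) r|) :=
    Set.Finite.bddAbove (Set.finite_range _)
  have hbdd0 : BddAbove (Set.range fun r : Fin d => |u k r|) :=
    Set.Finite.bddAbove (Set.finite_range _)
  have hua : ∀ r, |u (k+1) r| ≤ a := fun r => le_ciSup hbdd1 r
  have hub : ∀ r, |u k r| ≤ b := fun r => le_ciSup hbdd0 r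
  have ha0 : 0 ≤ a := le_trans (abs_nonneg _) (hua r0)
  have hb0 : 0 ≤ b := le_trans (abs_nonneg _) (hub r0)
  have ha1 : a ≤ 1 := ciSup_le fun r => hu (k+1) (by omega) r
  have hb1 : b ≤ 1 := ciSup_le fun r => hu k (by omega) r
  set M : ℝ := 2 * a + b with hM
  have hM0 : 0 ≤ M := by positivity
  have hvM : ∀ r, |v r| ≤ M := by
    intro r
    have h1 := hua r; have h2 := hub r
    have := abs_sub (2 * u (k+1) r) (u k r)
    calc |v r| ≤ |2 * u (k+1) r| + |u k r| := abs_sub _ _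
      _ = 2 * |u (k+1) r| + |u k r| := by rw [abs_mul]; norm_num
      _ ≤ M := by linarith
  -- Cauchy-Schwarz
  have hXY1 : ∑ r, X r * Y r ≤ 1 := by
    have hX1 : ∀ r, X r ≤ 1 := by
      intro r
      have := Finset.single_le_sum (f := X) (fun i _ => (hXpos i).le) (Finset.mem_univ r)
      rw [hX.2] at this; exact this
    calc ∑ r, X r * Y r ≤ ∑ r, Y r :=
          Finset.sum_le_sum fun r _ => by
            nlinarith [hXpos r, hYpos r, hX1 r]
      _ = 1 := hY.2
  have hCS : (∑ r, (X r - Y r) * v r) ^ 2 ≤ M ^ 2 * Q := by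
    set f : Fin d → ℝ := fun r => v r * Real.sqrt (X r * Y r) with hf
    set g : Fin d → ℝ := fun r => (X r - Y r) / Real.sqrt (X r * Y r) with hg
    have hsqrt : ∀ r, 0 < Real.sqrt (X r * Y r) := fun r =>
      Real.sqrt_pos.2 (mul_pos (hXpos r) (hYpos r))
    have hfg : ∀ r, f r * g r = (X r - Y r) * v r := by
      intro r
      have hne : Real.sqrt (X r * Y r) ≠ 0 := (hsqrt r).ne'
      have e : f r * g r
          = v r * (X r - Y r) * (Real.sqrt (X r * Y r) * (Real.sqrt (X r * Y r))⁻¹) := by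
        simp only [hf, hg, div_eq_mul_inv]
        ring
      rw [e, mul_inv_cancel₀ hne, mul_one]
      ring
    have hf2 : ∀ r, f r ^ 2 = v r ^ 2 * (X r * Y r) := by
      intro r
      simp only [hf, mul_pow, Real.sq_sqrt (mul_pos (hXpos r) (hYpos r)).le]
    have hg2 : ∀ r, g r ^ 2 = (X r - Y r) ^ 2 / (X r * Y r) := by
      intro r
      simp only [hg, div_pow, Real.sq_sqrt (mul_pos (hXpos r) (hYpos r)).le]
    have h := Finset.sum_mul_sq_le_sq_mul_sq Finset.univ f g
    have e1 : ∑ r, f r * g r = ∑ r, (X r - Y r) * v r :=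
      Finset.sum_congr rfl fun r _ => hfg r
    have e2 : ∑ r, g r ^ 2 = Q := Finset.sum_congr rfl fun r _ => hg2 r
    have e3 : ∑ r, f r ^ 2 ≤ M ^ 2 := by
      calc ∑ r, f r ^ 2 = ∑ r, v r ^ 2 * (X r * Y r) :=
            Finset.sum_congr rfl fun r _ => hf2 r
        _ ≤ ∑ r, M ^ 2 * (X r * Y r) := by
            refine Finset.sum_le_sum fun r _ => ?_
            have h1 : v r ^ 2 ≤ M ^ 2 :=
              sq_le_sq' (by linarith [(abs_le.1 (hvM r)).1]) (abs_le.1 (hvM r)).2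
            exact mul_le_mul_of_nonneg_right h1 (mul_pos (hXpos r) (hYpos r)).le
        _ = M ^ 2 * ∑ r, X r * Y r := by rw [← Finset.mul_sum]
        _ ≤ M ^ 2 * 1 := mul_le_mul_of_nonneg_left hXY1 (sq_nonneg M)
        _ = M ^ 2 := mul_one _
    rw [e1, e2] at h
    calc (∑ r, (X r - Y r) * v r) ^ 2 ≤ (∑ r, f r ^ 2) * Q := h
      _ ≤ M ^ 2 * Q := mul_le_mul_of_nonneg_right e3 hQ0
  set S : ℝ := Real.sqrt Q with hS
  have hS0 : 0 ≤ S := Real.sqrt_nonneg _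
  have hSQ : S ^ 2 = Q := Real.sq_sqrt hQ0
  have hdot : ∑ r, (X r - Y r) * v r ≤ M * S := by
    have h1 : ∑ r, (X r - Y r) * v r ≤ |∑ r, (X r - Y r) * v r| := le_abs_self _
    have h2 : |∑ r, (X r - Y r) * v r| = Real.sqrt ((∑ r, (X r - Y r) * v r) ^ 2) :=
      (Real.sqrt_sq_eq_abs _).symm
    have h3 : Real.sqrt ((∑ r, (X r - Y r) * v r) ^ 2) ≤ Real.sqrt (M ^ 2 * Q) :=
      Real.sqrt_le_sqrt hCS
    have h4 : Real.sqrt (M ^ 2 * Q) = M * S := by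
      rw [Real.sqrt_mul (sq_nonneg M), Real.sqrt_sq hM0]
    linarith
  have hQle : Q ≤ η * (M * S) :=
    le_trans key (mul_le_mul_of_nonneg_left hdot hη0.le)
  have hSle : S ≤ η * M := by
    rcases eq_or_lt_of_le hS0 with h | h
    · rw [← h]; positivity
    · have h5 : S * S ≤ (η * M) * S := by
        calc S * S = Q := by rw [← hSQ]; ring
          _ ≤ η * (M * S) := hQle
          _ = (η * M) * S := by ring
      exact le_of_mul_le_mul_right h5 h
  have hM3 : M ≤ 3 := by rw [hM]; linarith
  have hMsmall : η * M ≤ 3 / 16 := by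
    calc η * M ≤ (1/16) * 3 := mul_le_mul hη hM3 hM0 (by norm_num)
      _ = 3 / 16 := by norm_num
  have hS316 : S ≤ 3 / 16 := le_trans hSle hMsmall
  have hterm : ∀ r, (X r - Y r) ^ 2 ≤ X r * Y r := by
    intro r
    have h1 : (X r - Y r) ^ 2 / (X r * Y r) ≤ Q :=
      Finset.single_le_sum (f := fun r => (X r - Y r) ^ 2 / (X r * Y r))
        (fun i _ => div_nonneg (sq_nonneg _) (mul_pos (hXpos i) (hYpos i)).le)
        (Finset.mem_univ r)
    have h2 : Q ≤ 1 := by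
      calc Q = S ^ 2 := hSQ.symm
        _ ≤ (3/16) ^ 2 := pow_le_pow_left₀ hS0 hS316 2
        _ ≤ 1 := by norm_num
    exact (div_le_one (mul_pos (hXpos r) (hYpos r))).1 (le_trans h1 h2)
  have hcoord : ∀ r, (1 - X r / Y r) ^ 2 ≤ 3 * ((X r - Y r) ^ 2 / (X r * Y r)) := by
    intro r
    have hp := hXpos r
    have hq := hYpos r
    have h1 := hterm r
    have hp3 : X r ≤ 3 * Y r := by nlinarith
    have e : (1 - X r / Y r) ^ 2 = ((X r - Y r) ^ 2 / (X r * Y r)) * (X r / Y r) := by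
      field_simp
      ring
    rw [e]
    have h2 : X r / Y r ≤ 3 := (div_le_iff₀ hq).2 (by linarith)
    have h3 : 0 ≤ (X r - Y r) ^ 2 / (X r * Y r) :=
      div_nonneg (sq_nonneg _) (mul_pos hp hq).le
    calc (X r - Y r) ^ 2 / (X r * Y r) * (X r / Y r)
        ≤ (X r - Y r) ^ 2 / (X r * Y r) * 3 := mul_le_mul_of_nonneg_left h2 h3
      _ = 3 * ((X r - Y r) ^ 2 / (X r * Y r)) := mul_comm _ _
  have hG : ∑ r, (1 - X r / Y r) ^ 2 ≤ 3 * Q := by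
    calc ∑ r, (1 - X r / Y r) ^ 2 ≤ ∑ r, 3 * ((X r - Y r) ^ 2 / (X r * Y r)) :=
          Finset.sum_le_sum fun r _ => hcoord r
      _ = 3 * Q := by rw [← Finset.mul_sum]
  have hfinal : Real.sqrt (∑ r, (1 - X r / Y r) ^ 2) ≤ 2 * S := by
    calc Real.sqrt (∑ r, (1 - X r / Y r) ^ 2) ≤ Real.sqrt (4 * Q) :=
          Real.sqrt_le_sqrt (by linarith)
      _ = 2 * S := by
          rw [show (4 : ℝ) * Q = 2 ^ 2 * Q by ring, Real.sqrt_mul (by norm_num),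
            Real.sqrt_sq (by norm_num : (0:ℝ) ≤ 2)]
  calc Real.sqrt (∑ r, (1 - X r / Y r) ^ 2) ≤ 2 * S := hfinal
    _ ≤ 2 * (η * M) := by linarith
    _ = 4 * η * a + 2 * η * b := by rw [hM]; ring
    _ ≤ 6 * η * a + 2 * η * b := by nlinarith [mul_nonneg hη0.le ha0]
end

section
/- In the BM-OFTRL-LogBar setting with η ≤ 1/16, the stationary distributions move smoothly: for every t ∈ [T], ‖x^(t) − x^(t−1)‖₁² ≤ 64·m·∑_{a∈A} ∑_{a'∈A} ((x_a^(t)[a'] − x_a^(t−1)[a']) / x_a^(t−1)[a'])², where ‖v‖₁ = ∑_{a∈A} |v[a]|. -/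
open Finset Matrix

section BMAuxSection

open Function

namespace BMAux

variable {A : Type*} [Fintype A] [DecidableEq A]

lemma iter_update_eq (f : A → A) (p c b : A) :
    ∀ n : ℕ, (∀ i < n, f^[i] b ≠ p) → (Function.update f p c)^[n] b = f^[n] b := by
  intro n
  induction n generalizing b with
  | zero => intro _; rfl
  | succ n ih =>
    intro h
    have hb : b ≠ p := by simpa using h 0 (Nat.succ_pos n)
    rw [Function.iterate_succ_apply, Function.iterate_succ_apply,
      Function.update_of_ne hb]
    exact ih (f b) fun i hi => by
      have := h (i + 1) (by omega)
      rwa [Function.iterate_succ_apply] at this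

lemma exists_min_reach (f : A → A) (p b : A) (h : ∃ n, f^[n] b = p) :
    ∃ n, f^[n] b = p ∧ ∀ i < n, f^[i] b ≠ p :=
  ⟨Nat.find h, Nat.find_spec h, fun i hi => Nat.find_min h hi⟩

lemma reach_update (f : A → A) (p c b : A) (h : ∃ n, f^[n] b = p) :
    ∃ n, (Function.update f p c)^[n] b = p := by
  obtain ⟨n, hn, hmin⟩ := exists_min_reach f p b h
  exact ⟨n, (iter_update_eq f p c b n hmin).trans hn⟩

lemma update_fix {f : A → A} {a : A} (h : f a = a) : Function.update f a a = f := by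
  funext b
  rcases eq_or_ne b a with rfl | hb
  · rw [Function.update_self, h]
  · rw [Function.update_of_ne hb]

open scoped Classical in
/-- Arborescences rooted at `a`. -/
noncomputable def arbs (a : A) : Finset (A → A) :=
  Finset.univ.filter fun f => f a = a ∧ ∀ b, ∃ n, f^[n] b = a

open scoped Classical in
/-- Functions all of whose orbits pass through `a'` after a positive number of steps. -/
noncomputable def cycs (a' : A) : Finset (A → A) :=
  Finset.univ.filter fun g => ∀ b, ∃ n, 0 < n ∧ g^[n] b = a'

lemma mem_arbs {a : A} {f : A → A} :
    f ∈ arbs a ↔ f a = a ∧ ∀ b, ∃ n, f^[n] b = a := by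
  classical simp [arbs]

lemma mem_cycs {a' : A} {g : A → A} :
    g ∈ cycs a' ↔ ∀ b, ∃ n, 0 < n ∧ g^[n] b = a' := by
  classical simp [cycs]

/-- Weight of an arborescence. -/
def wgt (Q : A → A → ℝ) (a : A) (f : A → A) : ℝ := ∏ b ∈ Finset.univ.erase a, Q b (f b)

/-- Total arborescence weight to `a`. -/
noncomputable def wt (Q : A → A → ℝ) (a : A) : ℝ := ∑ f ∈ arbs a, wgt Q a f

noncomputable def gsum (Q : A → A → ℝ) (a' : A) : ℝ := ∑ g ∈ cycs a', ∏ b, Q b (g b)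

lemma wgt_update (Q : A → A → ℝ) (a c : A) (f : A → A) :
    (∏ b, Q b (Function.update f a c b)) = Q a c * wgt Q a f := by
  rw [← Finset.mul_prod_erase Finset.univ (fun b => Q b (Function.update f a c b))
    (Finset.mem_univ a), Function.update_self]
  congr 1
  refine Finset.prod_congr rfl fun b hb => ?_
  rw [Function.update_of_ne (Finset.mem_erase.mp hb).1]

lemma inj_aux (g : A → A) (a' p q : A) (hpq : p ≠ q) (hgp : g p = a')
    (hq : ∀ b, ∃ n, (Function.update g q q)^[n] b = q)
    {np nq : ℕ} (hnp : g^[np] a' = p) (hnqmin : ∀ i < nq, g^[i] a' ≠ q)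
    (hlt : np < nq) : False := by
  set f := Function.update g q q with hf
  have hit : ∀ i ≤ np, f^[i] a' = g^[i] a' := fun i hi =>
    iter_update_eq g q q a' i fun j hj => hnqmin j (by omega)
  have h1 : f^[np] a' = p := (hit np le_rfl).trans hnp
  have h2 : f^[np + 1] a' = a' := by
    rw [Function.iterate_succ_apply', h1, hf, Function.update_of_ne hpq, hgp]
  have hper : ∀ n, f^[n] a' = f^[n % (np + 1)] a' := by
    intro n
    conv_lhs => rw [← Nat.mod_add_div n (np + 1)]
    rw [Function.iterate_add_apply, Function.iterate_mul, Function.iterate_fixed h2]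
  have hbound : ∀ n, f^[n] a' ≠ q := by
    intro n
    rw [hper n]
    have hm : n % (np + 1) ≤ np := Nat.lt_succ_iff.mp (Nat.mod_lt _ (Nat.succ_pos np))
    rw [hit _ hm]
    exact hnqmin _ (lt_of_le_of_lt hm hlt)
  obtain ⟨n, hn⟩ := hq a'
  exact hbound n hn

lemma wt_eq_gsum (Q : A → A → ℝ) (hrow : ∀ a, ∑ b, Q a b = 1) (a' : A) :
    wt Q a' = gsum Q a' := by
  classical
  calc wt Q a' = ∑ f ∈ arbs a', ∑ c : A, Q a' c * wgt Q a' f := by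
        refine Finset.sum_congr rfl fun f hf => ?_
        rw [← Finset.sum_mul, hrow, one_mul]
    _ = ∑ p ∈ arbs a' ×ˢ (Finset.univ : Finset A), Q a' p.2 * wgt Q a' p.1 := by
        rw [Finset.sum_product]
    _ = gsum Q a' := ?_
  refine Finset.sum_nbij' (fun p => Function.update p.1 a' p.2)
    (fun g => (Function.update g a' a', g a')) ?_ ?_ ?_ ?_ ?_
  · rintro ⟨f, c⟩ hp
    obtain ⟨hf1, hf2⟩ := mem_arbs.mp (Finset.mem_product.mp hp).1
    dsimp only at hf1 hf2 ⊢
    refine mem_cycs.mpr fun b => ?_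
    obtain ⟨n, hn, hmin⟩ := exists_min_reach f a' b (hf2 b)
    rcases Nat.eq_zero_or_pos n with h0 | h0
    · -- b = a'
      subst h0
      obtain ⟨n₁, hn₁⟩ := reach_update f a' c c (hf2 c)
      refine ⟨n₁ + 1, Nat.succ_pos _, ?_⟩
      rw [Function.iterate_succ_apply]
      have hb : b = a' := hn
      rw [hb, Function.update_self]
      exact hn₁
    · exact ⟨n, h0, (iter_update_eq f a' c b n hmin).trans hn⟩
  · intro g hg
    refine Finset.mem_product.mpr ⟨mem_arbs.mpr ⟨Function.update_self _ _ _, fun b => ?_⟩,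
      Finset.mem_univ _⟩
    obtain ⟨n, -, hn⟩ := mem_cycs.mp hg b
    exact reach_update g a' a' b ⟨n, hn⟩
  · rintro ⟨f, c⟩ hp
    obtain ⟨hf1, -⟩ := mem_arbs.mp (Finset.mem_product.mp hp).1
    dsimp only at hf1 ⊢
    have h1 : Function.update (Function.update f a' c) a' a' = f := by
      rw [Function.update_idem, update_fix hf1]
    have h2 : Function.update f a' c a' = c := Function.update_self _ _ _
    simp [h1, h2]
  · intro g hg
    dsimp only
    rw [Function.update_idem, Function.update_eq_self]
  · rintro ⟨f, c⟩ hp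
    dsimp only
    rw [wgt_update]

lemma sum_wt_eq_gsum (Q : A → A → ℝ) (a' : A) :
    ∑ a, Q a a' * wt Q a = gsum Q a' := by
  classical
  have hstep : ∑ a, Q a a' * wt Q a
      = ∑ x ∈ Finset.univ.sigma (fun a : A => arbs a), Q x.1 a' * wgt Q x.1 x.2 := by
    calc ∑ a, Q a a' * wt Q a = ∑ a, ∑ f ∈ arbs a, Q a a' * wgt Q a f :=
          Finset.sum_congr rfl fun a _ => Finset.mul_sum _ _ _
      _ = _ := Finset.sum_sigma' Finset.univ (fun a : A => arbs a)
          (fun a f => Q a a' * wgt Q a f)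
  rw [hstep]
  refine Finset.sum_bij (fun x _ => Function.update x.2 x.1 a') ?_ ?_ ?_ ?_
  · rintro ⟨a, f⟩ hx
    obtain ⟨hf1, hf2⟩ := mem_arbs.mp (Finset.mem_sigma.mp hx).2
    dsimp only at hf1 hf2 ⊢
    refine mem_cycs.mpr fun b => ?_
    obtain ⟨n, hn, hmin⟩ := exists_min_reach f a b (hf2 b)
    refine ⟨n + 1, Nat.succ_pos _, ?_⟩
    rw [Function.iterate_succ_apply', (iter_update_eq f a a' b n hmin).trans hn,
      Function.update_self]
  · rintro ⟨a₁, f₁⟩ hx₁ ⟨a₂, f₂⟩ hx₂ heq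
    obtain ⟨hf₁1, hf₁2⟩ := mem_arbs.mp (Finset.mem_sigma.mp hx₁).2
    obtain ⟨hf₂1, hf₂2⟩ := mem_arbs.mp (Finset.mem_sigma.mp hx₂).2
    dsimp only at hf₁1 hf₁2 hf₂1 hf₂2 heq ⊢
    set g := Function.update f₁ a₁ a' with hgdef
    have hg₂ : g = Function.update f₂ a₂ a' := heq
    have hrec₁ : Function.update g a₁ a₁ = f₁ := by
      rw [hgdef, Function.update_idem, update_fix hf₁1]
    have hrec₂ : Function.update g a₂ a₂ = f₂ := by
      rw [hg₂, Function.update_idem, update_fix hf₂1]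
    have hga₁ : g a₁ = a' := by rw [hgdef]; exact Function.update_self _ _ _
    have hga₂ : g a₂ = a' := by rw [hg₂]; exact Function.update_self _ _ _
    have ha : a₁ = a₂ := by
      by_contra hne
      have h₁ : ∃ n, g^[n] a' = a₁ := by
        obtain ⟨n, hn, hmin⟩ := exists_min_reach f₁ a₁ a' (hf₁2 a')
        exact ⟨n, (iter_update_eq f₁ a₁ a' a' n hmin).trans hn⟩
      have h₂ : ∃ n, g^[n] a' = a₂ := by
        obtain ⟨n, hn, hmin⟩ := exists_min_reach f₂ a₂ a' (hf₂2 a')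
        refine ⟨n, ?_⟩
        rw [hg₂]
        exact (iter_update_eq f₂ a₂ a' a' n hmin).trans hn
      obtain ⟨n₁, hn₁, hmin₁⟩ := exists_min_reach g a₁ a' h₁
      obtain ⟨n₂, hn₂, hmin₂⟩ := exists_min_reach g a₂ a' h₂
      have hnn : n₁ ≠ n₂ := fun h => hne (by rw [← hn₁, h, hn₂])
      rcases lt_or_gt_of_ne hnn with hlt | hlt
      · exact inj_aux g a' a₁ a₂ hne hga₁
          (fun b => by rw [hrec₂]; exact hf₂2 b) hn₁ hmin₂ hlt
      · exact inj_aux g a' a₂ a₁ (Ne.symm hne) hga₂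
          (fun b => by rw [hrec₁]; exact hf₁2 b) hn₂ hmin₁ hlt
    subst ha
    rw [hrec₁.symm.trans hrec₂]
  · intro g hg
    have hgc := mem_cycs.mp hg
    obtain ⟨k, hk0, hk⟩ := hgc a'
    set a := g^[k - 1] a' with hadef
    have hga : g a = a' := by
      rw [hadef, ← Function.iterate_succ_apply' g (k - 1) a',
        Nat.succ_eq_add_one, Nat.sub_add_cancel hk0, hk]
    have hreach : ∀ b, ∃ n, g^[n] b = a := by
      intro b
      obtain ⟨m, hm0, hm⟩ := hgc b
      exact ⟨(k - 1) + m, by rw [Function.iterate_add_apply, hm]⟩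
    refine ⟨⟨a, Function.update g a a⟩, ?_, ?_⟩
    · refine Finset.mem_sigma.mpr ⟨Finset.mem_univ _, mem_arbs.mpr
        ⟨Function.update_self _ _ _, fun b => reach_update g a a b (hreach b)⟩⟩
    · show Function.update (Function.update g a a) a a' = g
      rw [Function.update_idem, ← hga, Function.update_eq_self]
  · rintro ⟨a, f⟩ hx
    dsimp only
    rw [wgt_update]

lemma wt_stat (Q : A → A → ℝ) (hrow : ∀ a, ∑ b, Q a b = 1) (a' : A) :
    ∑ a, Q a a' * wt Q a = wt Q a' :=
  (sum_wt_eq_gsum Q a').trans (wt_eq_gsum Q hrow a').symm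

lemma wgt_nonneg {Q : A → A → ℝ} (hpos : ∀ a b, 0 < Q a b) (a : A) (f : A → A) :
    0 ≤ wgt Q a f :=
  Finset.prod_nonneg fun b _ => (hpos b (f b)).le

lemma wt_pos {Q : A → A → ℝ} (hpos : ∀ a b, 0 < Q a b) (a : A) : 0 < wt Q a := by
  have hmem : (fun _ => a) ∈ arbs a :=
    mem_arbs.mpr ⟨rfl, fun b => ⟨1, by simp⟩⟩
  have h1 : 0 < wgt Q a (fun _ => a) := Finset.prod_pos fun b _ => hpos b a
  exact lt_of_lt_of_le h1
    (Finset.single_le_sum (fun f _ => wgt_nonneg hpos a f) hmem)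

lemma wt_nonneg {Q : A → A → ℝ} (hpos : ∀ a b, 0 < Q a b) (a : A) : 0 ≤ wt Q a :=
  (wt_pos hpos a).le

lemma stationary_unique (Q : A → A → ℝ) (hpos : ∀ a b, 0 < Q a b)
    (hrow : ∀ a, ∑ b, Q a b = 1) (π σ : A → ℝ)
    (hπ1 : ∑ a, π a = 1) (hσ1 : ∑ a, σ a = 1)
    (hπ : ∀ a', ∑ a, Q a a' * π a = π a')
    (hσ : ∀ a', ∑ a, Q a a' * σ a = σ a') : π = σ := by
  rcases isEmpty_or_nonempty A with hE | hE
  · exact funext fun a => (IsEmpty.false a).elim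
  obtain ⟨p0, -, hmin⟩ := Finset.exists_min_image (Finset.univ ×ˢ Finset.univ)
    (fun p : A × A => Q p.1 p.2) (Finset.univ_nonempty.product Finset.univ_nonempty)
  set q := Q p0.1 p0.2 with hqdef
  have hq0 : 0 < q := hpos _ _
  have hqle : ∀ a b, q ≤ Q a b := fun a b => hmin (a, b) (by simp)
  set d := fun a => π a - σ a with hddef
  have hd0 : ∑ a, d a = 0 := by
    simp only [hddef, Finset.sum_sub_distrib, hπ1, hσ1, sub_self]
  have hdst : ∀ a', ∑ a, (Q a a' - q) * d a = d a' := by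
    intro a'
    have h1 : ∑ a, Q a a' * d a = d a' := by
      simp only [hddef, mul_sub, Finset.sum_sub_distrib, hπ a', hσ a']
    have h2 : ∑ a, (Q a a' - q) * d a = ∑ a, Q a a' * d a - q * ∑ a, d a := by
      rw [Finset.mul_sum, ← Finset.sum_sub_distrib]
      exact Finset.sum_congr rfl fun a _ => by ring
    rw [h2, h1, hd0, mul_zero, sub_zero]
  have hcard : (0 : ℝ) < Fintype.card A := by
    exact_mod_cast Fintype.card_pos
  have habs : ∑ a', |d a'| ≤ (1 - Fintype.card A * q) * ∑ a, |d a| := by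
    calc ∑ a', |d a'| = ∑ a', |∑ a, (Q a a' - q) * d a| := by
          refine Finset.sum_congr rfl fun a' _ => ?_
          rw [hdst a']
      _ ≤ ∑ a', ∑ a, (Q a a' - q) * |d a| := by
          refine Finset.sum_le_sum fun a' _ => ?_
          refine (Finset.abs_sum_le_sum_abs _ _).trans (le_of_eq ?_)
          refine Finset.sum_congr rfl fun a _ => ?_
          rw [abs_mul, abs_of_nonneg (sub_nonneg.2 (hqle a a'))]
      _ = ∑ a, (∑ a', (Q a a' - q)) * |d a| := by
          rw [Finset.sum_comm]
          exact Finset.sum_congr rfl fun a _ => (Finset.sum_mul _ _ _).symm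
      _ = ∑ a, (1 - Fintype.card A * q) * |d a| := by
          refine Finset.sum_congr rfl fun a _ => ?_
          rw [Finset.sum_sub_distrib, hrow, Finset.sum_const, Finset.card_univ,
            nsmul_eq_mul]
      _ = (1 - Fintype.card A * q) * ∑ a, |d a| := by rw [Finset.mul_sum]
  have hsnn : 0 ≤ ∑ a, |d a| := Finset.sum_nonneg fun a _ => abs_nonneg _
  have h7 : (↑(Fintype.card A) * q) * ∑ a, |d a| ≤ 0 := by nlinarith [habs, hsnn]
  have h8 : 0 ≤ (↑(Fintype.card A) * q) * ∑ a, |d a| :=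
    mul_nonneg (mul_pos hcard hq0).le hsnn
  have hzero : ∑ a, |d a| = 0 := by
    rcases mul_eq_zero.mp (le_antisymm h7 h8) with h | h
    · exact absurd h (by positivity)
    · exact h
  funext a
  have : |d a| = 0 := by
    have := (Finset.sum_eq_zero_iff_of_nonneg fun a _ => abs_nonneg (d a)).mp hzero a
      (Finset.mem_univ a)
    exact this
  have : d a = 0 := abs_eq_zero.mp this
  have : π a - σ a = 0 := this
  linarith

lemma exp_neg_two_mul_le {x : ℝ} (h0 : 0 ≤ x) (h1 : x ≤ 1 / 2) :
    Real.exp (-(2 * x)) ≤ 1 - x := by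
  have h2 : 2 * x + 1 ≤ Real.exp (2 * x) := Real.add_one_le_exp _
  have h4 : 0 < Real.exp (2 * x) := Real.exp_pos _
  rw [Real.exp_neg]
  have h5 : (Real.exp (2 * x))⁻¹ * Real.exp (2 * x) = 1 := inv_mul_cancel₀ h4.ne'
  have h6 : 0 ≤ (Real.exp (2 * x))⁻¹ := by positivity
  nlinarith

lemma exp_three_le {z : ℝ} (h0 : 0 ≤ z) (h1 : z ≤ 1 / 4) :
    Real.exp (3 * z) ≤ 1 + 8 * z := by
  have ht : 0 < 1 - 3 * z / 2 := by linarith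
  have h2 : 1 - 3 * z / 2 ≤ Real.exp (-(3 * z / 2)) := by
    have := Real.add_one_le_exp (-(3 * z / 2)); linarith
  have h4 : 0 < Real.exp (3 * z / 2) := Real.exp_pos _
  have h5 : Real.exp (3 * z / 2) * (1 - 3 * z / 2) ≤ 1 := by
    rw [Real.exp_neg] at h2
    have h5' : Real.exp (3 * z / 2) * (Real.exp (3 * z / 2))⁻¹ = 1 :=
      mul_inv_cancel₀ h4.ne'
    nlinarith
  have h6 : Real.exp (3 * z) = Real.exp (3 * z / 2) * Real.exp (3 * z / 2) := by
    rw [← Real.exp_add]; ring_nf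
  have h8 : (Real.exp (3 * z / 2) * (1 - 3 * z / 2)) ^ 2 ≤ 1 := by
    nlinarith [h5, mul_nonneg h4.le ht.le]
  have h9 : (1 : ℝ) ≤ (1 + 8 * z) * (1 - 3 * z / 2) ^ 2 := by
    nlinarith [mul_nonneg h0 (sq_nonneg (z - 1/4)),
      mul_nonneg h0 (by linarith : (0:ℝ) ≤ 1/4 - z)]
  have ht2 : 0 < (1 - 3 * z / 2) ^ 2 := by positivity
  have h10 : Real.exp (3 * z / 2) ^ 2 * (1 - 3 * z / 2) ^ 2
      ≤ (1 + 8 * z) * (1 - 3 * z / 2) ^ 2 := by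
    calc Real.exp (3 * z / 2) ^ 2 * (1 - 3 * z / 2) ^ 2
        = (Real.exp (3 * z / 2) * (1 - 3 * z / 2)) ^ 2 := by ring
      _ ≤ 1 := h8
      _ ≤ (1 + 8 * z) * (1 - 3 * z / 2) ^ 2 := h9
  have h11 : Real.exp (3 * z / 2) ^ 2 ≤ 1 + 8 * z :=
    le_of_mul_le_mul_right h10 ht2
  rw [h6]; nlinarith

set_option maxHeartbeats 1000000 in
lemma stationary_perturb (Q Q' : A → A → ℝ)
    (hQp : ∀ a b, 0 < Q a b) (hQr : ∀ a, ∑ b, Q a b = 1)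
    (hQ'p : ∀ a b, 0 < Q' a b) (hQ'r : ∀ a, ∑ b, Q' a b = 1)
    (π π' : A → ℝ) (hπ0 : ∀ a, 0 ≤ π a) (hπ1 : ∑ a, π a = 1)
    (hπ'0 : ∀ a, 0 ≤ π' a) (hπ'1 : ∑ a, π' a = 1)
    (hπs : ∀ a', ∑ a, Q a a' * π a = π a')
    (hπ's : ∀ a', ∑ a, Q' a a' * π' a = π' a') :
    (∑ a, |π' a - π a|) ^ 2 ≤
      64 * (Fintype.card A : ℝ) * ∑ a, ∑ b, ((Q' a b - Q a b) / Q a b) ^ 2 := by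
  have hne : Nonempty A := by
    rcases isEmpty_or_nonempty A with hE | hE
    · rw [Finset.univ_eq_empty, Finset.sum_empty] at hπ1; norm_num at hπ1
    · exact hE
  set m : ℝ := (Fintype.card A : ℝ) with hmdef
  set S : ℝ := ∑ a, ∑ b, ((Q' a b - Q a b) / Q a b) ^ 2 with hSdef
  have hS0 : 0 ≤ S := Finset.sum_nonneg fun a _ =>
    Finset.sum_nonneg fun b _ => sq_nonneg _
  have hm1 : (1 : ℝ) ≤ m := by
    rw [hmdef]; exact_mod_cast Fintype.card_pos
  have hD0 : 0 ≤ ∑ a, |π' a - π a| := Finset.sum_nonneg fun a _ => abs_nonneg _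
  have hD2 : ∑ a, |π' a - π a| ≤ 2 := by
    calc ∑ a, |π' a - π a| ≤ ∑ a, (π' a + π a) := by
          refine Finset.sum_le_sum fun a _ => ?_
          refine (abs_sub _ _).trans ?_
          rw [abs_of_nonneg (hπ'0 a), abs_of_nonneg (hπ0 a)]
      _ = 2 := by rw [Finset.sum_add_distrib, hπ1, hπ'1]; norm_num
  by_cases hc : 1 ≤ 16 * m * S
  · nlinarith
  push_neg at hc
  set z : ℝ := Real.sqrt (m * S) with hzdef
  have hz0 : 0 ≤ z := Real.sqrt_nonneg _
  have hz2 : z ^ 2 = m * S := Real.sq_sqrt (by positivity)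
  have hz4 : z ≤ 1 / 4 := by nlinarith
  set ε : A → A → ℝ := fun a b => (Q' a b - Q a b) / Q a b with hεdef
  have hQ'eq : ∀ a b, Q' a b = Q a b * (1 + ε a b) := by
    intro a b
    have hne' : Q a b ≠ 0 := (hQp a b).ne'
    rw [hεdef]
    field_simp
    ring
  have hεsq : ∀ a b, ε a b ^ 2 ≤ S := by
    intro a b
    calc ε a b ^ 2 ≤ ∑ b', ε a b' ^ 2 :=
          Finset.single_le_sum (f := fun b' => ε a b' ^ 2)
            (fun i _ => sq_nonneg _) (Finset.mem_univ b)
      _ ≤ S := Finset.single_le_sum (f := fun a => ∑ b', ε a b' ^ 2)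
          (fun i _ => Finset.sum_nonneg fun j _ => sq_nonneg _) (Finset.mem_univ a)
  have hεle : ∀ a b, |ε a b| ≤ 1 / 4 := by
    intro a b
    have h1 : |ε a b| ^ 2 ≤ z ^ 2 := by
      rw [sq_abs, hz2]; nlinarith [hεsq a b]
    nlinarith [abs_nonneg (ε a b)]
  -- sum of |ε| along an arborescence is at most z
  have hEf : ∀ (a : A) (f : A → A), ∑ b ∈ Finset.univ.erase a, |ε b (f b)| ≤ z := by
    intro a f
    have hcs := sq_sum_le_card_mul_sum_sq (s := Finset.univ.erase a)
      (f := fun b => |ε b (f b)|)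
    have h1 : ∑ b ∈ Finset.univ.erase a, |ε b (f b)| ^ 2 ≤ S := by
      simp only [sq_abs]
      calc ∑ b ∈ Finset.univ.erase a, ε b (f b) ^ 2
          ≤ ∑ b, ε b (f b) ^ 2 := Finset.sum_le_sum_of_subset_of_nonneg
            (Finset.erase_subset _ _) (fun b _ _ => sq_nonneg _)
        _ ≤ ∑ b, ∑ b', ε b b' ^ 2 := Finset.sum_le_sum fun b _ =>
            Finset.single_le_sum (f := fun b' => ε b b' ^ 2)
              (fun i _ => sq_nonneg _) (Finset.mem_univ (f b))
    have hcard : ((Finset.univ.erase a).card : ℝ) ≤ m := by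
      rw [hmdef]
      exact_mod_cast Finset.card_le_card (Finset.erase_subset _ _) |>.trans
        (le_of_eq Finset.card_univ)
    have h2 : (∑ b ∈ Finset.univ.erase a, |ε b (f b)|) ^ 2 ≤ z ^ 2 := by
      rw [hz2]
      calc (∑ b ∈ Finset.univ.erase a, |ε b (f b)|) ^ 2
          ≤ ((Finset.univ.erase a).card : ℝ)
            * ∑ b ∈ Finset.univ.erase a, |ε b (f b)| ^ 2 := hcs
        _ ≤ m * S := by
            apply mul_le_mul hcard h1 (Finset.sum_nonneg fun b _ => sq_nonneg _)
              (by linarith)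
    nlinarith [Finset.sum_nonneg (s := Finset.univ.erase a)
      (f := fun b => |ε b (f b)|) (fun b _ => abs_nonneg _)]
  -- pointwise weight bounds
  have hupper : ∀ a, ∀ f, wgt Q' a f ≤ Real.exp z * wgt Q a f := by
    intro a f
    calc wgt Q' a f = ∏ b ∈ Finset.univ.erase a, Q b (f b) * (1 + ε b (f b)) :=
          Finset.prod_congr rfl fun b _ => hQ'eq b (f b)
      _ ≤ ∏ b ∈ Finset.univ.erase a, Q b (f b) * Real.exp |ε b (f b)| := by
          refine Finset.prod_le_prod (fun b _ => ?_) (fun b _ => ?_)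
          · rw [← hQ'eq]; exact (hQ'p b (f b)).le
          · refine mul_le_mul_of_nonneg_left ?_ (hQp b (f b)).le
            have := Real.add_one_le_exp |ε b (f b)|
            have h1 : 1 + ε b (f b) ≤ 1 + |ε b (f b)| := by
              linarith [le_abs_self (ε b (f b))]
            linarith
      _ = wgt Q a f * Real.exp (∑ b ∈ Finset.univ.erase a, |ε b (f b)|) := by
          rw [Finset.prod_mul_distrib, Real.exp_sum]; rfl
      _ ≤ wgt Q a f * Real.exp z :=
          mul_le_mul_of_nonneg_left (Real.exp_le_exp.2 (hEf a f)) (wgt_nonneg hQp a f)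
      _ = Real.exp z * wgt Q a f := mul_comm _ _
  have hlower : ∀ a, ∀ f, Real.exp (-(2 * z)) * wgt Q a f ≤ wgt Q' a f := by
    intro a f
    calc Real.exp (-(2 * z)) * wgt Q a f
        ≤ Real.exp (-(2 * ∑ b ∈ Finset.univ.erase a, |ε b (f b)|)) * wgt Q a f := by
          refine mul_le_mul_of_nonneg_right ?_ (wgt_nonneg hQp a f)
          refine Real.exp_le_exp.2 ?_
          have := hEf a f
          linarith
      _ = ∏ b ∈ Finset.univ.erase a, Q b (f b) * Real.exp (-(2 * |ε b (f b)|)) := by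
          have hsum : -(2 * ∑ b ∈ Finset.univ.erase a, |ε b (f b)|)
              = ∑ b ∈ Finset.univ.erase a, -(2 * |ε b (f b)|) := by
            rw [Finset.mul_sum, neg_eq_iff_eq_neg, ← Finset.sum_neg_distrib]
            simp
          rw [Finset.prod_mul_distrib, ← Real.exp_sum, ← hsum, mul_comm]
          rfl
      _ ≤ ∏ b ∈ Finset.univ.erase a, Q' b (f b) := by
          refine Finset.prod_le_prod (fun b _ => ?_) (fun b _ => ?_)
          · exact mul_nonneg (hQp b (f b)).le (Real.exp_pos _).le
          · rw [hQ'eq b (f b)]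
            refine mul_le_mul_of_nonneg_left ?_ (hQp b (f b)).le
            have h1 : |ε b (f b)| ≤ 1 / 2 := (hεle b (f b)).trans (by norm_num)
            have h2 := exp_neg_two_mul_le (abs_nonneg (ε b (f b))) h1
            have h3 : -(ε b (f b)) ≤ |ε b (f b)| := neg_le_abs _
            linarith
      _ = wgt Q' a f := rfl
  -- total weight bounds
  have hwup : ∀ a, wt Q' a ≤ Real.exp z * wt Q a := by
    intro a
    calc wt Q' a ≤ ∑ f ∈ arbs a, Real.exp z * wgt Q a f :=
          Finset.sum_le_sum fun f _ => hupper a f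
      _ = Real.exp z * wt Q a := by rw [← Finset.mul_sum]; rfl
  have hwlo : ∀ a, Real.exp (-(2 * z)) * wt Q a ≤ wt Q' a := by
    intro a
    calc Real.exp (-(2 * z)) * wt Q a = ∑ f ∈ arbs a, Real.exp (-(2 * z)) * wgt Q a f := by
          rw [← Finset.mul_sum]; rfl
      _ ≤ wt Q' a := Finset.sum_le_sum fun f _ => hlower a f
  set W : ℝ := ∑ a, wt Q a with hWdef
  set W' : ℝ := ∑ a, wt Q' a with hW'def
  have hW : 0 < W := Finset.sum_pos (fun a _ => wt_pos hQp a) Finset.univ_nonempty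
  have hW' : 0 < W' := Finset.sum_pos (fun a _ => wt_pos hQ'p a) Finset.univ_nonempty
  have hWup : W' ≤ Real.exp z * W := by
    rw [hWdef, hW'def, Finset.mul_sum]
    exact Finset.sum_le_sum fun a _ => hwup a
  have hWlo : Real.exp (-(2 * z)) * W ≤ W' := by
    rw [hWdef, hW'def, Finset.mul_sum]
    exact Finset.sum_le_sum fun a _ => hwlo a
  -- identify the stationary distributions with normalized tree weights
  have hid : ∀ (R : A → A → ℝ), (∀ a b, 0 < R a b) → (∀ a, ∑ b, R a b = 1) →
      ∀ (ρ : A → ℝ), (∑ a, ρ a = 1) → (∀ a', ∑ a, R a a' * ρ a = ρ a') →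
      ρ = fun a => wt R a / ∑ a', wt R a' := by
    intro R hRp hRr ρ hρ1 hρs
    have hWR : 0 < ∑ a', wt R a' := Finset.sum_pos (fun a _ => wt_pos hRp a)
      Finset.univ_nonempty
    refine stationary_unique R hRp hRr ρ _ hρ1 ?_ hρs ?_
    · rw [← Finset.sum_div, div_self hWR.ne']
    · intro a'
      have h1 : ∑ a, R a a' * (wt R a / ∑ a', wt R a') =
          (∑ a, R a a' * wt R a) / ∑ a', wt R a' := by
        rw [Finset.sum_div]
        exact Finset.sum_congr rfl fun a _ => (mul_div_assoc _ _ _).symm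
      rw [h1, wt_stat R hRr a']
  have hπeq := hid Q hQp hQr π hπ1 hπs
  have hπ'eq := hid Q' hQ'p hQ'r π' hπ'1 hπ's
  -- pointwise comparison
  have hexp3 : Real.exp z * Real.exp (2 * z) = Real.exp (3 * z) := by
    rw [← Real.exp_add]; ring_nf
  have hptw : ∀ a, |π' a - π a| ≤ (Real.exp (3 * z) - 1) * π a := by
    intro a
    have hπa : π a = wt Q a / W := by rw [hπeq]
    have hπ'a : π' a = wt Q' a / W' := by rw [hπ'eq]
    have hup : π' a ≤ Real.exp (3 * z) * π a := by
      rw [hπa, hπ'a]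
      have h1 : wt Q' a / W' ≤ (Real.exp z * wt Q a) / (Real.exp (-(2 * z)) * W) :=
        div_le_div₀ (mul_nonneg (Real.exp_pos z).le (wt_nonneg hQp a)) (hwup a)
          (mul_pos (Real.exp_pos _) hW) hWlo
      calc wt Q' a / W' ≤ (Real.exp z * wt Q a) / (Real.exp (-(2 * z)) * W) := h1
        _ = Real.exp (3 * z) * (wt Q a / W) := by
            have harg : z - -(2 * z) = 3 * z := by ring
            rw [mul_div_mul_comm, ← Real.exp_sub, harg]
    have hlo : Real.exp (-(3 * z)) * π a ≤ π' a := by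
      rw [hπa, hπ'a]
      have h1 : (Real.exp (-(2 * z)) * wt Q a) / (Real.exp z * W) ≤ wt Q' a / W' :=
        div_le_div₀ (wt_nonneg hQ'p a) (hwlo a) hW' hWup
      calc Real.exp (-(3 * z)) * (wt Q a / W)
          = (Real.exp (-(2 * z)) * wt Q a) / (Real.exp z * W) := by
            have harg : -(2 * z) - z = -(3 * z) := by ring
            rw [mul_div_mul_comm, ← Real.exp_sub, harg]
        _ ≤ wt Q' a / W' := h1
    have hpexp : 2 ≤ Real.exp (3 * z) + Real.exp (-(3 * z)) := by
      have hmul : Real.exp (3 * z) * Real.exp (-(3 * z)) = 1 := by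
        rw [← Real.exp_add]; ring_nf; exact Real.exp_zero
      nlinarith [sq_nonneg (Real.exp (3 * z) - 1), Real.exp_pos (3 * z),
        Real.exp_pos (-(3 * z))]
    rw [abs_le]
    constructor
    · have h2 : (1 - Real.exp (-(3 * z))) * π a ≤ (Real.exp (3 * z) - 1) * π a := by
        refine mul_le_mul_of_nonneg_right ?_ (hπ0 a)
        linarith
      nlinarith [hlo, h2, hπ0 a]
    · nlinarith [hup, hπ0 a]
  -- sum up
  have hsum : ∑ a, |π' a - π a| ≤ Real.exp (3 * z) - 1 := by
    calc ∑ a, |π' a - π a| ≤ ∑ a, (Real.exp (3 * z) - 1) * π a :=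
          Finset.sum_le_sum fun a _ => hptw a
      _ = (Real.exp (3 * z) - 1) * 1 := by rw [← Finset.mul_sum, hπ1]
      _ = Real.exp (3 * z) - 1 := mul_one _
  have h8z : Real.exp (3 * z) - 1 ≤ 8 * z := by
    have := exp_three_le hz0 hz4
    linarith
  have hD8 : ∑ a, |π' a - π a| ≤ 8 * z := hsum.trans h8z
  calc (∑ a, |π' a - π a|) ^ 2 ≤ (8 * z) ^ 2 := by nlinarith
    _ = 64 * (m * S) := by rw [mul_pow, ← hz2]; ring
    _ = 64 * m * S := by ring

end BMAux

end BMAuxSection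

/-- The Blum–Mansour algorithm with log-barrier OFTRL (BM-OFTRL-LogBar) over a
finite action set `A`, horizon `T`, learning rate `η`, observed utility vectors
`u^(0), …, u^(T)`, played strategies `x^(t)` and row strategies `x_a^(t)`:
`x^(0)` and each `x_a^(0)` are uniform; for `t ∈ [T]` and `a ∈ A`, `x_a^(t)`
maximizes `η⟨y, x^(t−1)[a]·u^(t−1) + ∑_{τ=1}^{t−1} x^(τ)[a]·u^(τ)⟩ + ∑_{a'} log y[a']`
over the relative interior of the simplex (log-barrier OFTRL on the utility
sequence `(x^(τ)[a]·u^(τ))_τ` with prediction `x^(t−1)[a]·u^(t−1)`), and the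
played `x^(t) ∈ Δ(A)` is a stationary distribution of the row-stochastic matrix
`Q^(t)` whose row `a` is `x_a^(t)`. -/
def IsBMOFTRLLogBar {A : Type*} [Fintype A] (T : ℕ) (η : ℝ)
    (u : ℕ → A → ℝ) (x : ℕ → A → ℝ) (xa : A → ℕ → A → ℝ) : Prop :=
  (x 0 = fun _ => (Fintype.card A : ℝ)⁻¹)
  ∧ (∀ a, xa a 0 = fun _ => (Fintype.card A : ℝ)⁻¹)
  ∧ (∀ t ∈ Finset.Icc 1 T, ∀ a : A,
      xa a t ∈ simplexInterior A ∧
      IsMaxOn (fun y : A → ℝ =>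
          η * (y ⬝ᵥ (x (t - 1) a • u (t - 1) + ∑ τ ∈ Finset.Icc 1 (t - 1), x τ a • u τ))
            + ∑ a', Real.log (y a'))
        (simplexInterior A) (xa a t))
  ∧ (∀ t ∈ Finset.Icc 1 T,
      x t ∈ stdSimplex ℝ A ∧ ∀ a', ∑ a, xa a t a' * x t a = x t a')

/-- in the BM-OFTRL-LogBar setting with `η ≤ 1/16`, the stationary
distributions move smoothly: for every `t ∈ [T]`,
`‖x^(t) − x^(t−1)‖₁² ≤ 64·m·∑_{a,a'} ((x_a^(t)[a'] − x_a^(t−1)[a'])/x_a^(t−1)[a'])²`. -/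
theorem bm_oftrl_logbar_stationary_smoothness
    (A : Type*) [Fintype A] (hA : 2 ≤ Fintype.card A)
    (T : ℕ) (η : ℝ) (hη0 : 0 < η) (hη : η ≤ 1 / 16)
    (u : ℕ → A → ℝ) (hu : ∀ t ≤ T, ∀ a, |u t a| ≤ 1)
    (x : ℕ → A → ℝ) (xa : A → ℕ → A → ℝ)
    (hBM : IsBMOFTRLLogBar T η u x xa) :
    ∀ t ∈ Finset.Icc 1 T,
      (∑ a, |x t a - x (t - 1) a|) ^ 2 ≤
        64 * (Fintype.card A : ℝ)
          * ∑ a, ∑ a', ((xa a t a' - xa a (t - 1) a') / xa a (t - 1) a') ^ 2 := by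
  classical
  obtain ⟨hx0, hxa0, hmax, hstat⟩ := hBM
  intro t ht
  have hcard : (0 : ℝ) < Fintype.card A := by
    have : 0 < Fintype.card A := by omega
    exact_mod_cast this
  have hcne : (Fintype.card A : ℝ) ≠ 0 := hcard.ne'
  have hQ'mem : ∀ a, (∀ b, 0 < xa a t b) ∧ ∑ b, xa a t b = 1 := fun a =>
    (hmax t ht a).1
  have hπ'mem : (∀ a, 0 ≤ x t a) ∧ ∑ a, x t a = 1 := (hstat t ht).1
  have hQ'p : ∀ a b, 0 < xa a t b := fun a b => (hQ'mem a).1 b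
  have hQ'r : ∀ a, ∑ b, xa a t b = 1 := fun a => (hQ'mem a).2
  have hπ'0 : ∀ a, 0 ≤ x t a := hπ'mem.1
  have hπ'1 : ∑ a, x t a = 1 := hπ'mem.2
  have hπ's : ∀ a', ∑ a, xa a t a' * x t a = x t a' := (hstat t ht).2
  obtain ⟨h1t, htT⟩ := Finset.mem_Icc.mp ht
  rcases eq_or_lt_of_le h1t with h1 | h1
  · -- t = 1
    have ht0 : t - 1 = 0 := by omega
    rw [ht0]
    have hQp : ∀ a b, 0 < xa a 0 b := by
      intro a b; rw [hxa0 a]; exact inv_pos.2 hcard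
    have hQr : ∀ a, ∑ b, xa a 0 b = 1 := by
      intro a; rw [hxa0 a]
      simp [Finset.sum_const, Finset.card_univ, hcne]
    have hπ0 : ∀ a, 0 ≤ x 0 a := by
      intro a; rw [hx0]; positivity
    have hπ1 : ∑ a, x 0 a = 1 := by
      rw [hx0]; simp [Finset.sum_const, Finset.card_univ, hcne]
    have hπs : ∀ a', ∑ a, xa a 0 a' * x 0 a = x 0 a' := by
      intro a'
      have h2 : ∀ a, xa a 0 a' * x 0 a
          = (Fintype.card A : ℝ)⁻¹ * (Fintype.card A : ℝ)⁻¹ := by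
        intro a; rw [hxa0 a, hx0]
      rw [Finset.sum_congr rfl fun a _ => h2 a, Finset.sum_const, Finset.card_univ,
        nsmul_eq_mul, hx0]
      field_simp
    exact BMAux.stationary_perturb (A := A) (fun a b => xa a 0 b) (fun a b => xa a t b)
      hQp hQr hQ'p hQ'r (x 0) (x t) hπ0 hπ1 hπ'0 hπ'1 hπs hπ's
  · -- 2 ≤ t
    have htm : t - 1 ∈ Finset.Icc 1 T := Finset.mem_Icc.mpr ⟨by omega, by omega⟩
    have hQmem : ∀ a, (∀ b, 0 < xa a (t - 1) b) ∧ ∑ b, xa a (t - 1) b = 1 := fun a =>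
      (hmax (t - 1) htm a).1
    have hπmem : (∀ a, 0 ≤ x (t - 1) a) ∧ ∑ a, x (t - 1) a = 1 := (hstat (t - 1) htm).1
    exact BMAux.stationary_perturb (A := A) (fun a b => xa a (t - 1) b)
      (fun a b => xa a t b) (fun a b => (hQmem a).1 b) (fun a => (hQmem a).2)
      hQ'p hQ'r (x (t - 1)) (x t) hπmem.1 hπmem.2 hπ'0 hπ'1
      (hstat (t - 1) htm).2 hπ's
end
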